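/- arXiv:2302.12361 — 9 statements merged into one kernel-verified Lean document; each statement's English description precedes it below -/
import Mathlib

section
/- Let C be a proper positive cone in a finite-dimensional real inner product space V and let u ∈ C. Then u lies in the topological interior of C if and only if for every x ∈ V there exists a natural number n such that n•u − x ∈ C. -/
/-!
If `u` is interior, `u - x / n ∈ C` for large `n`, and scaling by `n` gives `n • u - x ∈ C`.
Conversely, pick an interior point `w` and `n` with `n • u - (w - u) ∈ C`: then
`(n + 1) • u = (n • u - (w - u)) + w` lies in `C + interior C ⊆ interior C`, and `interior C` is
invariant under positive scaling.
-/

open Pointwise Filter Topology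

section ConeInterior

variable {E : Type*} [AddCommGroup E] [Module ℝ E] [TopologicalSpace E] {C : Set E}

theorem exists_nat_smul_sub_mem_of_mem_interior [IsTopologicalAddGroup E] [ContinuousSMul ℝ E]
    (hsmul : ∀ r : ℝ, 0 ≤ r → ∀ x ∈ C, r • x ∈ C)
    {u : E} (hu : u ∈ interior C) (x : E) : ∃ n : ℕ, (n : ℝ) • u - x ∈ C := by
  have hlim : Tendsto (fun n : ℕ => u - (n : ℝ)⁻¹ • x) atTop (𝓝 u) := by
    simpa using tendsto_const_nhds.sub
      ((tendsto_inv_atTop_zero.comp (tendsto_natCast_atTop_atTop (R := ℝ))).smul_const x)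
  obtain ⟨n, hn, hmem⟩ :=
    ((hlim.eventually (mem_interior_iff_mem_nhds.mp hu)).and (eventually_ge_atTop 1)).exists
  refine ⟨n, ?_⟩
  have hn0 : (n : ℝ) ≠ 0 := by exact_mod_cast (Nat.one_le_iff_ne_zero.mp hmem)
  simpa [smul_sub, smul_inv_smul₀ hn0] using hsmul n n.cast_nonneg _ hn

variable [ContinuousConstSMul ℝ E]

theorem smul_mem_interior_of_smul_mem (hsmul : ∀ r : ℝ, 0 ≤ r → ∀ x ∈ C, r • x ∈ C)
    {r : ℝ} (hr : 0 < r) {x : E} (hx : x ∈ interior C) : r • x ∈ interior C := by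
  have hrC : r • C ⊆ C := by
    rintro _ ⟨y, hy, rfl⟩
    exact hsmul r hr.le y hy
  apply interior_mono hrC
  rw [interior_smul₀ hr.ne']
  exact Set.smul_mem_smul_set hx

variable [IsTopologicalAddGroup E]

theorem add_mem_interior_of_smul_mem (hconvex : Convex ℝ C)
    (hsmul : ∀ r : ℝ, 0 ≤ r → ∀ x ∈ C, r • x ∈ C) {x y : E} (hx : x ∈ C)
    (hy : y ∈ interior C) : x + y ∈ interior C := by
  have hmid : (1 / 2 : ℝ) • x + (1 / 2 : ℝ) • y ∈ interior C :=
    hconvex.combo_self_interior_mem_interior hx hy (by norm_num) (by norm_num) (by norm_num)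
  have h2 := smul_mem_interior_of_smul_mem hsmul two_pos hmid
  rwa [smul_add, smul_smul, smul_smul, show (2 : ℝ) * (1 / 2) = 1 by norm_num, one_smul,
    one_smul] at h2

theorem mem_interior_of_forall_exists_nat_smul_sub_mem (hconvex : Convex ℝ C)
    (hsmul : ∀ r : ℝ, 0 ≤ r → ∀ x ∈ C, r • x ∈ C) (hint : (interior C).Nonempty) {u : E}
    (h : ∀ x : E, ∃ n : ℕ, (n : ℝ) • u - x ∈ C) : u ∈ interior C := by
  obtain ⟨w, hw⟩ := hint
  obtain ⟨n, hn⟩ := h (w - u)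
  -- Testing against `w - u` instead of `w` makes the multiplier `n + 1` positive.
  have hsucc : ((n : ℝ) + 1) • u ∈ interior C := by
    convert add_mem_interior_of_smul_mem hconvex hsmul hn hw using 1
    rw [add_smul, one_smul]
    abel
  have hpos : (0 : ℝ) < n + 1 := n.cast_add_one_pos
  simpa [smul_smul, inv_mul_cancel₀ hpos.ne'] using
    smul_mem_interior_of_smul_mem hsmul (inv_pos.mpr hpos) hsucc

end ConeInterior

theorem stmt_0_general {V : Type*} [NormedAddCommGroup V] [InnerProductSpace ℝ V]
    (C : Set V)
    (hconvex : Convex ℝ C)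
    (hint : (interior C).Nonempty)
    (hsmul : ∀ (r : ℝ), 0 ≤ r → ∀ x ∈ C, r • x ∈ C)
    (u : V) :
    u ∈ interior C ↔ ∀ x : V, ∃ n : ℕ, (n : ℝ) • u - x ∈ C :=
  ⟨exists_nat_smul_sub_mem_of_mem_interior hsmul,
    mem_interior_of_forall_exists_nat_smul_sub_mem hconvex hsmul hint⟩

theorem stmt_0 {V : Type*} [NormedAddCommGroup V] [InnerProductSpace ℝ V]
    [FiniteDimensional ℝ V] (C : Set V)
    (hclosed : IsClosed C) (hconvex : Convex ℝ C)
    (hint : (interior C).Nonempty)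
    (hsmul : ∀ (r : ℝ), 0 ≤ r → ∀ x ∈ C, r • x ∈ C)
    (hproper : C ∩ (-C) = {0})
    (u : V) (hu : u ∈ C) :
    u ∈ interior C ↔ ∀ x : V, ∃ n : ℕ, (n : ℝ) • u - x ∈ C :=
  stmt_0_general C hconvex hint hsmul u
end

section
/- Let Λ be a nonempty (possibly uncountable) index set, let {C_λ}_{λ∈Λ} be a family of positive cones in V, and let C₁, C₂ be positive cones with C₁ ⊆ C_λ ⊆ C₂ for every λ ∈ Λ. Then the dual cone of the intersection satisfies (⋂_{λ∈Λ} C_λ)* = Σ_{λ∈Λ} C_λ*, where Σ_{λ∈Λ} C_λ* denotes the topological closure of the set of all finite sums Σ_{i∈I} x_i with I ⊆ Λ finite and x_i ∈ C_i*. -/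
open Pointwise RealInnerProductSpace

/-- The dual cone of a set in a real inner product space. -/
def dualCone {V : Type*} [NormedAddCommGroup V] [InnerProductSpace ℝ V] (C : Set V) : Set V :=
  {x : V | ∀ y ∈ C, 0 ≤ ⟪x, y⟫}

/-- The closed sum `Σ_{λ∈Λ} C_λ`: the topological closure of the set of all finite sums
`Σ_{i∈I} x_i` with `I ⊆ Λ` finite and `x_i ∈ C_i`. -/
def coneSum {V : Type*} [NormedAddCommGroup V] {Λ : Type*} (Cfam : Λ → Set V) : Set V :=
  closure {x : V | ∃ (I : Finset Λ) (f : Λ → V), (∀ i ∈ I, f i ∈ Cfam i) ∧ x = ∑ i ∈ I, f i}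

/-- The inner dual cone of a set, as a convex cone. -/
def Set.innerDualCone {H : Type*} [NormedAddCommGroup H] [InnerProductSpace ℝ H] (s : Set H) :
    ConvexCone ℝ H where
  carrier := {y | ∀ x ∈ s, 0 ≤ ⟪x, y⟫}
  smul_mem' := fun c hc y hy x hx => by
    rw [real_inner_smul_right]; exact mul_nonneg hc.le (hy x hx)
  add_mem' := fun u hu v hv x hx => by
    rw [inner_add_right]; exact add_nonneg (hu x hx) (hv x hx)

theorem mem_innerDualCone {H : Type*} [NormedAddCommGroup H] [InnerProductSpace ℝ H]
    (y : H) (s : Set H) : y ∈ s.innerDualCone ↔ ∀ x ∈ s, 0 ≤ ⟪x, y⟫ := Iff.rfl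

theorem ConvexCone.innerDualCone_of_innerDualCone_eq_self {H : Type*} [NormedAddCommGroup H]
    [InnerProductSpace ℝ H] [CompleteSpace H] (K : ConvexCone ℝ H) (ne : (K : Set H).Nonempty)
    (hc : IsClosed (K : Set H)) : ((K : Set H).innerDualCone : Set H).innerDualCone = K := by
  obtain ⟨x, hx⟩ := ne
  have h0 : (0 : H) ∈ (K : Set H) := by
    have ht : Filter.Tendsto (fun t : ℝ => t • x) (nhdsWithin 0 (Set.Ioi 0)) (nhds 0) := by
      have : Filter.Tendsto (fun t : ℝ => t • x) (nhds 0) (nhds ((0 : ℝ) • x)) :=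
        (continuous_id.smul continuous_const).tendsto 0
      rw [zero_smul] at this
      exact this.mono_left nhdsWithin_le_nhds
    refine hc.mem_of_tendsto ht ?_
    filter_upwards [self_mem_nhdsWithin] with t ht
    exact K.smul_mem ht hx
  let P : ProperCone ℝ H :=
    { toSubmodule :=
        { carrier := (K : Set H)
          zero_mem' := h0
          add_mem' := fun ha hb => K.add_mem ha hb
          smul_mem' := fun c y hy => by
            rcases eq_or_lt_of_le c.2 with h | h
            · have : c = 0 := NNReal.eq h.symm
              subst this; simpa using h0
            · exact K.smul_mem (c := (c : ℝ)) h hy }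
      isClosed' := hc }
  have h := ProperCone.innerDual_innerDual P
  ext y
  have hy := SetLike.ext_iff.mp h y
  simp only [ProperCone.mem_innerDual] at hy
  exact hy

lemma dualCone_eq_innerDualCone {V : Type*} [NormedAddCommGroup V] [InnerProductSpace ℝ V]
    (C : Set V) : dualCone C = (C.innerDualCone : Set V) := by
  ext x
  simp only [dualCone, Set.mem_setOf_eq, SetLike.mem_coe, mem_innerDualCone]
  constructor
  · intro h y hy; rw [real_inner_comm]; exact h y hy
  · intro h y hy; rw [real_inner_comm]; exact h y hy

/-- Biduality for closed convex cones given as sets. -/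
lemma bidual_eq_self {V : Type*} [NormedAddCommGroup V] [InnerProductSpace ℝ V]
    [CompleteSpace V] {C : Set V} (hne : C.Nonempty) (hcl : IsClosed C) (hconv : Convex ℝ C)
    (hsm : ∀ r : ℝ, 0 ≤ r → ∀ x ∈ C, r • x ∈ C) :
    (((C.innerDualCone : Set V)).innerDualCone : Set V) = C := by
  let K : ConvexCone ℝ V :=
    { carrier := C
      smul_mem' := fun {r} hr {x} hx => hsm r hr.le x hx
      add_mem' := fun {x} hx {y} hy => by
        have h1 : (1/2 : ℝ) • x + (1/2 : ℝ) • y ∈ C :=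
          hconv hx hy (by norm_num) (by norm_num) (by norm_num)
        have h2 := hsm 2 (by norm_num) _ h1
        have h3 : (2:ℝ) • ((1/2 : ℝ) • x + (1/2 : ℝ) • y) = x + y := by
          rw [smul_add, smul_smul, smul_smul]; norm_num
        rwa [h3] at h2 }
  have : (K : Set V) = C := rfl
  rw [← this] at hne hcl ⊢
  exact congrArg _ (K.innerDualCone_of_innerDualCone_eq_self hne hcl)

theorem stmt_3 {V : Type*} [NormedAddCommGroup V] [InnerProductSpace ℝ V]
    [FiniteDimensional ℝ V] {Λ : Type*} [Nonempty Λ]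
    (Cfam : Λ → Set V)
    (hfam : ∀ l : Λ, IsClosed (Cfam l) ∧ Convex ℝ (Cfam l) ∧
      (interior (Cfam l)).Nonempty ∧
      (∀ (r : ℝ), 0 ≤ r → ∀ x ∈ Cfam l, r • x ∈ Cfam l))
    (C1 C2 : Set V)
    (hC1 : IsClosed C1 ∧ Convex ℝ C1 ∧ (interior C1).Nonempty ∧
      (∀ (r : ℝ), 0 ≤ r → ∀ x ∈ C1, r • x ∈ C1))
    (hC2 : IsClosed C2 ∧ Convex ℝ C2 ∧ (interior C2).Nonempty ∧
      (∀ (r : ℝ), 0 ≤ r → ∀ x ∈ C2, r • x ∈ C2))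
    (hsub : ∀ l : Λ, C1 ⊆ Cfam l ∧ Cfam l ⊆ C2) :
    dualCone (⋂ l, Cfam l) = coneSum (fun l => dualCone (Cfam l)) := by
  classical
  haveI : CompleteSpace V := FiniteDimensional.complete ℝ V
  set D : Set V := {x : V | ∃ (I : Finset Λ) (f : Λ → V),
    (∀ i ∈ I, f i ∈ dualCone (Cfam i)) ∧ x = ∑ i ∈ I, f i} with hDdef
  -- basic closure properties of dualCone sets
  have hdzero : ∀ S : Set V, (0 : V) ∈ dualCone S := by
    intro S y _; rw [inner_zero_left]
  have hdadd : ∀ (S : Set V) x y, x ∈ dualCone S → y ∈ dualCone S → x + y ∈ dualCone S := by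
    intro S x y hx hy z hz
    rw [inner_add_left]; exact add_nonneg (hx z hz) (hy z hz)
  have hdsmul : ∀ (S : Set V) (r : ℝ), 0 ≤ r → ∀ x ∈ dualCone S, r • x ∈ dualCone S := by
    intro S r hr x hx z hz
    rw [real_inner_smul_left]; exact mul_nonneg hr (hx z hz)
  -- each dual cone is contained in D
  have hsubD : ∀ l : Λ, dualCone (Cfam l) ⊆ D := by
    intro l x hx
    exact ⟨{l}, fun _ => x, fun i hi => by
      rw [Finset.mem_singleton] at hi; subst hi; exact hx, by simp⟩
  have h0D : (0 : V) ∈ D := ⟨∅, 0, by simp, by simp⟩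
  -- D is a convex cone
  let KD : ConvexCone ℝ V :=
    { carrier := D
      smul_mem' := by
        rintro r hr x ⟨I, f, hf, rfl⟩
        exact ⟨I, fun i => r • f i, fun i hi => hdsmul _ r hr.le _ (hf i hi),
          by simp [Finset.smul_sum]⟩
      add_mem' := by
        rintro x ⟨I, f, hf, rfl⟩ y ⟨J, g, hg, rfl⟩
        refine ⟨I ∪ J, fun i => (if i ∈ I then f i else 0) + (if i ∈ J then g i else 0),
          fun i hi => hdadd _ _ _ ?_ ?_, ?_⟩
        · split_ifs with h
          · exact hf i h
          · exact hdzero _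
        · split_ifs with h
          · exact hg i h
          · exact hdzero _
        · rw [Finset.sum_add_distrib]
          congr 1
          · rw [Finset.sum_ite_mem, Finset.union_inter_cancel_left]
          · rw [Finset.sum_ite_mem, Finset.union_inter_cancel_right] }
  -- dual of D equals dual of closure of D
  have hdual_closure : ((closure D).innerDualCone : Set V) = (D.innerDualCone : Set V) := by
    apply subset_antisymm
    · intro x hx
      rw [SetLike.mem_coe, mem_innerDualCone] at hx ⊢
      exact fun y hy => hx y (subset_closure hy)
    · intro x hx
      rw [SetLike.mem_coe, mem_innerDualCone] at hx ⊢
      intro y hy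
      have hcl : IsClosed {y : V | 0 ≤ ⟪y, x⟫} :=
        isClosed_le continuous_const (continuous_id.inner continuous_const)
      exact hcl.closure_subset_iff.mpr (fun d hd => hx d hd) hy
  -- dual of D is the intersection
  have hdualD : (D.innerDualCone : Set V) = ⋂ l, Cfam l := by
    apply subset_antisymm
    · intro x hx
      rw [SetLike.mem_coe, mem_innerDualCone] at hx
      rw [Set.mem_iInter]
      intro l
      obtain ⟨hcl, hconv, ⟨z, hz⟩, hsm⟩ := hfam l
      have hne : (Cfam l).Nonempty := ⟨z, interior_subset hz⟩
      rw [← bidual_eq_self hne hcl hconv hsm, SetLike.mem_coe, mem_innerDualCone]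
      intro y hy
      refine hx y (hsubD l ?_)
      rw [dualCone_eq_innerDualCone]; exact hy
    · intro x hx
      rw [Set.mem_iInter] at hx
      rw [SetLike.mem_coe, mem_innerDualCone]
      rintro d ⟨I, f, hf, rfl⟩
      rw [sum_inner]
      exact Finset.sum_nonneg fun i hi => hf i hi x (hx i)
  -- closure D is a nonempty closed convex cone, apply biduality
  have hKD : (KD : Set V) = D := rfl
  have hclKD : (KD.closure : Set V) = closure D := by rw [ConvexCone.coe_closure, hKD]
  have hbidual : (((closure D : Set V).innerDualCone : Set V)).innerDualCone = closure D := by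
    have hne : (closure D).Nonempty := ⟨0, subset_closure h0D⟩
    have := KD.closure.innerDualCone_of_innerDualCone_eq_self (by rwa [hclKD])
      (by rw [hclKD]; exact isClosed_closure)
    have h2 := congrArg (fun K : ConvexCone ℝ V => (K : Set V)) this
    simpa [hclKD] using h2
  have : coneSum (fun l => dualCone (Cfam l)) = closure D := rfl
  rw [this, dualCone_eq_innerDualCone, ← hdualD, ← hdual_closure, hbidual]
end

section
/- Let (M1, M2) be a two-outcome DOVM. The following are equivalent: (1) (M1, M2) is BQ, i.e., some M_i satisfies λ_min(M_i) < 0 and λ_max(M_i) ≥ 1; (2) there exist pure states ρ1 and ρ2 (rank-one positive semidefinite matrices of trace 1) such that Tr(ρ_i · M_j) = δ_{ij} for all i, j ∈ {1, 2} and Tr(ρ1 · ρ2) > 0. -/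
open Kronecker ComplexOrder

/-- Smallest eigenvalue of a Hermitian matrix (junk value `0` otherwise). -/
noncomputable def lambdaMin {ι : Type*} [Fintype ι] [DecidableEq ι]
    (M : Matrix ι ι ℂ) : ℝ :=
  if h : M.IsHermitian then ⨅ i, h.eigenvalues i else 0

/-- Largest eigenvalue of a Hermitian matrix (junk value `0` otherwise). -/
noncomputable def lambdaMax {ι : Type*} [Fintype ι] [DecidableEq ι]
    (M : Matrix ι ι ℂ) : ℝ :=
  if h : M.IsHermitian then ⨆ i, h.eigenvalues i else 0

/-- The dual cone `SEP*` of the separable cone: Hermitian matrices pairing nonnegatively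
with all products of positive semidefinite matrices. -/
def SEPdual (dA dB : ℕ) : Set (Matrix (Fin dA × Fin dB) (Fin dA × Fin dB) ℂ) :=
  {X | X.IsHermitian ∧ ∀ (a : Matrix (Fin dA) (Fin dA) ℂ) (b : Matrix (Fin dB) (Fin dB) ℂ),
      a.PosSemidef → b.PosSemidef → 0 ≤ (X * (a ⊗ₖ b)).trace}

open scoped Matrix

section Helpers

variable {ι : Type*} [Fintype ι] [DecidableEq ι]

lemma aux_vecMulVec_mulVec (x y z : ι → ℂ) :
    Matrix.vecMulVec x y *ᵥ z = (y ⬝ᵥ z) • x := by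
  funext k
  simp only [Matrix.mulVec, dotProduct, Matrix.vecMulVec_apply, Pi.smul_apply,
    smul_eq_mul, Finset.sum_mul]
  exact Finset.sum_congr rfl fun j _ => by ring

lemma aux_trace_vecMulVec_mul (x : ι → ℂ) (M : Matrix ι ι ℂ) :
    (Matrix.vecMulVec x (star x) * M).trace = star x ⬝ᵥ (M *ᵥ x) := by
  simp only [Matrix.trace, Matrix.diag, Matrix.mul_apply, Matrix.vecMulVec_apply,
    dotProduct, Matrix.mulVec, Pi.star_apply]
  rw [Finset.sum_comm]
  refine Finset.sum_congr rfl fun j _ => ?_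
  rw [Finset.mul_sum]
  exact Finset.sum_congr rfl fun i _ => by ring

lemma aux_trace_vecMulVec (x : ι → ℂ) :
    (Matrix.vecMulVec x (star x)).trace = star x ⬝ᵥ x := by
  simp only [Matrix.trace, Matrix.diag, Matrix.vecMulVec_apply, dotProduct, Pi.star_apply]
  exact Finset.sum_congr rfl fun j _ => by ring

lemma aux_vecMulVec_posSemidef (x : ι → ℂ) :
    (Matrix.vecMulVec x (star x)).PosSemidef := by
  rw [Matrix.vecMulVec_eq Unit, ← Matrix.conjTranspose_replicateCol]
  exact Matrix.posSemidef_self_mul_conjTranspose _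

lemma aux_vecMulVec_rank (x : ι → ℂ) (hx : x ≠ 0) :
    (Matrix.vecMulVec x (star x)).rank = 1 := by
  refine le_antisymm ?_ ?_
  · rw [Matrix.vecMulVec_eq Unit]
    exact le_trans (Matrix.rank_mul_le_left _ _) (le_trans (Matrix.rank_le_card_width _) (by simp))
  · have hdot : star x ⬝ᵥ x ≠ 0 := fun h => hx (dotProduct_star_self_eq_zero.mp h)
    have hnz : Matrix.vecMulVec x (star x) *ᵥ x ≠ 0 := by
      rw [aux_vecMulVec_mulVec]
      intro h
      apply hx
      have := congrArg (fun v => (star x ⬝ᵥ x)⁻¹ • v) h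
      simpa [smul_smul, inv_mul_cancel₀ hdot] using this
    rw [Matrix.rank]
    rw [Nat.one_le_iff_ne_zero]
    intro h0
    have : Nontrivial (LinearMap.range (Matrix.vecMulVec x (star x)).mulVecLin) := by
      exact nontrivial_of_ne ⟨Matrix.vecMulVec x (star x) *ᵥ x, ⟨x, rfl⟩⟩ 0
        fun h => hnz (congrArg Subtype.val h)
    have := Module.finrank_pos_iff (R := ℂ).mpr this
    omega

lemma aux_trace_conjTranspose_mul_self_eq_zero {A : Matrix ι ι ℂ}
    (h : (Aᴴ * A).trace = 0) : A = 0 := by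
  have key : (Aᴴ * A).trace = ((∑ j, ∑ i, Complex.normSq (A i j) : ℝ) : ℂ) := by
    simp only [Matrix.trace, Matrix.diag, Matrix.mul_apply, Matrix.conjTranspose_apply]
    push_cast
    refine Finset.sum_congr rfl fun j _ => Finset.sum_congr rfl fun i _ => ?_
    rw [Complex.normSq_eq_conj_mul_self]
    rfl
  rw [key, Complex.ofReal_eq_zero] at h
  have hz : ∀ j ∈ Finset.univ, ∀ i ∈ Finset.univ, Complex.normSq (A i j) = 0 := by
    intro j _ i _
    have h1 : ∀ j ∈ (Finset.univ : Finset ι), 0 ≤ ∑ i, Complex.normSq (A i j) :=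
      fun j _ => Finset.sum_nonneg fun i _ => Complex.normSq_nonneg _
    have h2 := (Finset.sum_eq_zero_iff_of_nonneg h1).mp h j (Finset.mem_univ j)
    exact (Finset.sum_eq_zero_iff_of_nonneg
      (fun i _ => Complex.normSq_nonneg _)).mp h2 i (Finset.mem_univ i)
  ext i j
  simpa [Complex.normSq_eq_zero] using hz j (Finset.mem_univ j) i (Finset.mem_univ i)

lemma aux_psd_trace_mul_eq_zero {A B : Matrix ι ι ℂ}
    (hA : A.PosSemidef) (hB : B.PosSemidef) (h : (A * B).trace = 0) : A * B = 0 := by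
  obtain ⟨P, hP⟩ : ∃ P : Matrix ι ι ℂ, A = Pᴴ * P := by
    open scoped MatrixOrder in exact CStarAlgebra.nonneg_iff_eq_star_mul_self.mp hA.nonneg
  obtain ⟨Q, hQ⟩ : ∃ Q : Matrix ι ι ℂ, B = Qᴴ * Q := by
    open scoped MatrixOrder in exact CStarAlgebra.nonneg_iff_eq_star_mul_self.mp hB.nonneg
  have key : P * Qᴴ = 0 := by
    apply aux_trace_conjTranspose_mul_self_eq_zero
    have : (P * Qᴴ)ᴴ * (P * Qᴴ) = Q * (Pᴴ * P * Qᴴ) := by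
      rw [Matrix.conjTranspose_mul, Matrix.conjTranspose_conjTranspose]
      noncomm_ring
    rw [this, Matrix.trace_mul_comm,
      show Pᴴ * P * Qᴴ * Q = A * B by rw [hP, hQ]; noncomm_ring]
    exact h
  calc A * B = Pᴴ * (P * Qᴴ) * Q := by rw [hP, hQ]; noncomm_ring
  _ = 0 := by rw [key, Matrix.mul_zero, Matrix.zero_mul]

lemma aux_trace_bound [Nonempty ι] {ρ M : Matrix ι ι ℂ}
    (hρ : ρ.PosSemidef) (hρt : ρ.trace = 1) (hM : M.IsHermitian) {c : ℝ}
    (hc : (ρ * M).trace = (c : ℂ)) :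
    (⨅ k, hM.eigenvalues k) ≤ c ∧ c ≤ ⨆ k, hM.eigenvalues k := by
  set U : Matrix ι ι ℂ := ↑(hM.eigenvectorUnitary) with hUdef
  have hUU : U * Uᴴ = 1 := by
    rw [← Matrix.star_eq_conjTranspose]
    exact Matrix.mem_unitaryGroup_iff.mp (hM.eigenvectorUnitary).2
  set σ := Uᴴ * ρ * U with hσdef
  have hσ : σ.PosSemidef := hρ.conjTranspose_mul_mul_same U
  have hσt : σ.trace = 1 := by
    rw [hσdef, Matrix.trace_mul_comm, ← Matrix.mul_assoc, hUU, Matrix.one_mul, hρt]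
  have hdiag : ∀ k, σ k k = ((σ k k).re : ℂ) ∧ 0 ≤ (σ k k).re := by
    intro k
    have h0 : (0:ℂ) ≤ σ k k := by
      have := (Matrix.posSemidef_iff_dotProduct_mulVec.mp hσ).2 (Pi.single k 1)
      simpa [Matrix.mulVec_single, dotProduct, Pi.single_apply] using this
    rw [Complex.nonneg_iff] at h0
    refine ⟨Complex.ext (by simp) (by simpa using h0.2.symm), h0.1⟩
  have key : (ρ * M).trace = ∑ k, σ k k * (hM.eigenvalues k : ℂ) := by
    conv_lhs => rw [hM.spectral_theorem, Unitary.conjStarAlgAut_apply]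
    have e1 : ρ * (U * Matrix.diagonal (RCLike.ofReal ∘ hM.eigenvalues) * star U)
        = (ρ * U * Matrix.diagonal (RCLike.ofReal ∘ hM.eigenvalues)) * Uᴴ := by
      rw [← Matrix.star_eq_conjTranspose]; noncomm_ring
    rw [e1, Matrix.trace_mul_comm, ← Matrix.mul_assoc, ← Matrix.mul_assoc, ← hσdef]
    simp [Matrix.trace, Matrix.diag, Matrix.mul_diagonal]
  set s : ι → ℝ := fun k => (σ k k).re with hsdef
  have hceq : c = ∑ k, s k * hM.eigenvalues k := by
    apply Complex.ofReal_injective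
    rw [← hc, key]
    push_cast
    exact Finset.sum_congr rfl fun k _ => by rw [(hdiag k).1]
  have hsum : ∑ k, s k = 1 := by
    have := congrArg Complex.re hσt
    simpa [Matrix.trace, Matrix.diag, Complex.re_sum] using this
  have hbdd := Finite.bddBelow_range hM.eigenvalues
  have hbddA := Finite.bddAbove_range hM.eigenvalues
  constructor
  · rw [hceq]
    calc (⨅ k, hM.eigenvalues k) = ∑ k, s k * (⨅ k, hM.eigenvalues k) := by
          rw [← Finset.sum_mul, hsum, one_mul]
    _ ≤ ∑ k, s k * hM.eigenvalues k := by
          refine Finset.sum_le_sum fun k _ => ?_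
          exact mul_le_mul_of_nonneg_left (ciInf_le hbdd k) (hdiag k).2
  · rw [hceq]
    calc ∑ k, s k * hM.eigenvalues k ≤ ∑ k, s k * (⨆ k, hM.eigenvalues k) := by
          refine Finset.sum_le_sum fun k _ => ?_
          exact mul_le_mul_of_nonneg_left (le_ciSup hbddA k) (hdiag k).2
    _ = ⨆ k, hM.eigenvalues k := by rw [← Finset.sum_mul, hsum, one_mul]

lemma aux_construct {M : Matrix ι ι ℂ}
    (hM : M.IsHermitian) {i j : ι} (hb : hM.eigenvalues i < 0) (ha : 1 ≤ hM.eigenvalues j) :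
    ∃ ρ1 ρ2 : Matrix ι ι ℂ, ρ1.PosSemidef ∧ ρ1.trace = 1 ∧ ρ1.rank = 1 ∧
      ρ2.PosSemidef ∧ ρ2.trace = 1 ∧ ρ2.rank = 1 ∧
      (ρ1 * M).trace = 1 ∧ (ρ2 * M).trace = 0 ∧ 0 < (ρ1 * ρ2).trace := by
  have hij : j ≠ i := fun h => by subst h; linarith
  set a := hM.eigenvalues j with hadef
  set b := hM.eigenvalues i with hbdef
  set u : ι → ℂ := ⇑(hM.eigenvectorBasis j) with hudef
  set w : ι → ℂ := ⇑(hM.eigenvectorBasis i) with hwdef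
  have horth := hM.eigenvectorBasis.orthonormal
  rw [orthonormal_iff_ite] at horth
  have hdot : ∀ p q : ι, star (⇑(hM.eigenvectorBasis p) : ι → ℂ) ⬝ᵥ ⇑(hM.eigenvectorBasis q)
      = if p = q then 1 else 0 := by
    intro p q
    have := horth p q
    rw [PiLp.inner_apply] at this
    simp only [RCLike.inner_apply] at this
    rw [← this]
    simp only [dotProduct, Pi.star_apply, starRingEnd_apply]
    exact Finset.sum_congr rfl fun _ _ => mul_comm _ _
  have huu : star u ⬝ᵥ u = 1 := by rw [hudef]; simpa using hdot j j
  have hww : star w ⬝ᵥ w = 1 := by rw [hwdef]; simpa using hdot i i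
  have huw : star u ⬝ᵥ w = 0 := by rw [hudef, hwdef]; simpa [hij] using hdot j i
  have hwu : star w ⬝ᵥ u = 0 := by rw [hudef, hwdef]; simpa [Ne.symm hij] using hdot i j
  have hMu : M *ᵥ u = (a:ℂ) • u := by
    have := hM.mulVec_eigenvectorBasis j
    funext k
    simpa [Complex.real_smul] using congrFun this k
  have hMw : M *ᵥ w = (b:ℂ) • w := by
    have := hM.mulVec_eigenvectorBasis i
    funext k
    simpa [Complex.real_smul] using congrFun this k
  set x : ℝ → ℝ → (ι → ℂ) := fun t s => (t:ℂ) • u + (s:ℂ) • w with hxdef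
  have dot_xx : ∀ t s t' s' : ℝ, star (x t s) ⬝ᵥ x t' s' = ((t*t' + s*s' : ℝ) : ℂ) := by
    intro t s t' s'
    simp only [hxdef, star_add, star_smul, add_dotProduct, dotProduct_add,
      smul_dotProduct, dotProduct_smul, huu, hww, huw, hwu, smul_eq_mul,
      Complex.star_def, Complex.conj_ofReal]
    push_cast
    ring
  have hMx : ∀ t s : ℝ, M *ᵥ x t s = x (t*a) (s*b) := by
    intro t s
    simp only [hxdef, Matrix.mulVec_add, Matrix.mulVec_smul, hMu, hMw, smul_smul]
    push_cast
    ring_nf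
  set d := a - b with hddef
  have hd : 0 < d := by simp only [hddef]; linarith
  set t1 := Real.sqrt ((1-b)/d) with ht1def
  set s1 := Real.sqrt ((a-1)/d) with hs1def
  set t2 := Real.sqrt (-b/d) with ht2def
  set s2 := Real.sqrt (a/d) with hs2def
  have ht1 : t1*t1 = (1-b)/d := Real.mul_self_sqrt (div_nonneg (by linarith) hd.le)
  have hs1 : s1*s1 = (a-1)/d := Real.mul_self_sqrt (div_nonneg (by linarith) hd.le)
  have ht2 : t2*t2 = -b/d := Real.mul_self_sqrt (div_nonneg (by linarith) hd.le)
  have hs2 : s2*s2 = a/d := Real.mul_self_sqrt (div_nonneg (by linarith) hd.le)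
  have ht1pos : 0 < t1 := Real.sqrt_pos.mpr (div_pos (by linarith) hd)
  have ht2pos : 0 < t2 := Real.sqrt_pos.mpr (div_pos (by linarith) hd)
  have hs1nn : 0 ≤ s1 := Real.sqrt_nonneg _
  have hs2nn : 0 ≤ s2 := Real.sqrt_nonneg _
  set x1 := x t1 s1 with hx1def
  set x2 := x t2 s2 with hx2def
  have hx1n : star x1 ⬝ᵥ x1 = 1 := by
    rw [hx1def, dot_xx]
    have : t1*t1 + s1*s1 = 1 := by
      rw [ht1, hs1, ← add_div, div_eq_one_iff_eq hd.ne']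
      ring
    rw [this]; norm_num
  have hx2n : star x2 ⬝ᵥ x2 = 1 := by
    rw [hx2def, dot_xx]
    have : t2*t2 + s2*s2 = 1 := by
      rw [ht2, hs2, ← add_div, div_eq_one_iff_eq hd.ne']
      ring
    rw [this]; norm_num
  have hMx1 : star x1 ⬝ᵥ (M *ᵥ x1) = 1 := by
    rw [hx1def, hMx, dot_xx]
    have : t1*(t1*a) + s1*(s1*b) = 1 := by
      have e : t1*(t1*a) + s1*(s1*b) = (t1*t1)*a + (s1*s1)*b := by ring
      rw [e, ht1, hs1, div_mul_eq_mul_div, div_mul_eq_mul_div, ← add_div,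
        div_eq_one_iff_eq hd.ne']
      ring
    rw [this]; norm_num
  have hMx2 : star x2 ⬝ᵥ (M *ᵥ x2) = 0 := by
    rw [hx2def, hMx, dot_xx]
    have : t2*(t2*a) + s2*(s2*b) = 0 := by
      have e : t2*(t2*a) + s2*(s2*b) = (t2*t2)*a + (s2*s2)*b := by ring
      rw [e, ht2, hs2, div_mul_eq_mul_div, div_mul_eq_mul_div, ← add_div]
      rw [div_eq_zero_iff]
      left; ring
    rw [this]; norm_num
  set c := t2*t1 + s2*s1 with hcdef
  have hcpos : 0 < c := add_pos_of_pos_of_nonneg (mul_pos ht2pos ht1pos) (mul_nonneg hs2nn hs1nn)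
  have hx21 : star x2 ⬝ᵥ x1 = (c:ℂ) := by rw [hx2def, hx1def, dot_xx]
  have hx12 : star x1 ⬝ᵥ x2 = (c:ℂ) := by rw [hx1def, hx2def, dot_xx]; norm_cast; ring
  have hx1ne : x1 ≠ 0 := by
    intro h
    rw [h] at hx1n
    simp at hx1n
  have hx2ne : x2 ≠ 0 := by
    intro h
    rw [h] at hx2n
    simp at hx2n
  refine ⟨Matrix.vecMulVec x1 (star x1), Matrix.vecMulVec x2 (star x2),
    aux_vecMulVec_posSemidef x1, by rw [aux_trace_vecMulVec, hx1n],
    aux_vecMulVec_rank x1 hx1ne,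
    aux_vecMulVec_posSemidef x2, by rw [aux_trace_vecMulVec, hx2n],
    aux_vecMulVec_rank x2 hx2ne,
    by rw [aux_trace_vecMulVec_mul, hMx1],
    by rw [aux_trace_vecMulVec_mul, hMx2], ?_⟩
  rw [aux_trace_vecMulVec_mul, aux_vecMulVec_mulVec, dotProduct_smul, hx21, hx12,
    smul_eq_mul]
  rw [← Complex.ofReal_mul]
  exact Complex.zero_lt_real.mpr (mul_pos hcpos hcpos)

end Helpers

theorem stmt_5 {dA dB : ℕ} (hdA : 2 ≤ dA) (hdB : 2 ≤ dB)
    (M1 M2 : Matrix (Fin dA × Fin dB) (Fin dA × Fin dB) ℂ)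
    (hM1 : M1 ∈ SEPdual dA dB) (hM2 : M2 ∈ SEPdual dA dB)
    (hsum : M1 + M2 = 1) :
    ((lambdaMin M1 < 0 ∧ 1 ≤ lambdaMax M1) ∨ (lambdaMin M2 < 0 ∧ 1 ≤ lambdaMax M2)) ↔
    (∃ ρ1 ρ2 : Matrix (Fin dA × Fin dB) (Fin dA × Fin dB) ℂ,
      ρ1.PosSemidef ∧ ρ1.trace = 1 ∧ ρ1.rank = 1 ∧
      ρ2.PosSemidef ∧ ρ2.trace = 1 ∧ ρ2.rank = 1 ∧
      (ρ1 * M1).trace = 1 ∧ (ρ1 * M2).trace = 0 ∧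
      (ρ2 * M1).trace = 0 ∧ (ρ2 * M2).trace = 1 ∧
      0 < (ρ1 * ρ2).trace) := by
  haveI : Nonempty (Fin dA × Fin dB) := ⟨(⟨0, by omega⟩, ⟨0, by omega⟩)⟩
  obtain ⟨hH1, -⟩ := hM1
  obtain ⟨hH2, -⟩ := hM2
  have hlmin1 : lambdaMin M1 = ⨅ k, hH1.eigenvalues k := dif_pos hH1
  have hlmax1 : lambdaMax M1 = ⨆ k, hH1.eigenvalues k := dif_pos hH1
  have hlmin2 : lambdaMin M2 = ⨅ k, hH2.eigenvalues k := dif_pos hH2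
  have hlmax2 : lambdaMax M2 = ⨆ k, hH2.eigenvalues k := dif_pos hH2
  have hM2eq : M2 = 1 - M1 := by rw [← hsum]; abel
  have hM1eq : M1 = 1 - M2 := by rw [← hsum]; abel
  constructor
  · rintro (⟨hmin, hmax⟩ | ⟨hmin, hmax⟩)
    · -- M1 is BQ
      rw [hlmin1] at hmin
      rw [hlmax1] at hmax
      obtain ⟨i, hi⟩ := exists_eq_ciInf_of_finite (f := hH1.eigenvalues)
      obtain ⟨j, hj⟩ := exists_eq_ciSup_of_finite (f := hH1.eigenvalues)
      have hbi : hH1.eigenvalues i < 0 := by rw [hi]; exact hmin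
      have haj : 1 ≤ hH1.eigenvalues j := by rw [hj]; exact hmax
      obtain ⟨ρ1, ρ2, h1, h2, h3, h4, h5, h6, h7, h8, h9⟩ := aux_construct hH1 hbi haj
      refine ⟨ρ1, ρ2, h1, h2, h3, h4, h5, h6, h7, ?_, ?_, ?_, h9⟩
      · rw [hM2eq, Matrix.mul_sub, Matrix.mul_one, Matrix.trace_sub, h2, h7]; ring
      · exact h8
      · rw [hM2eq, Matrix.mul_sub, Matrix.mul_one, Matrix.trace_sub, h5, h8]; ring
    · -- M2 is BQ
      rw [hlmin2] at hmin
      rw [hlmax2] at hmax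
      obtain ⟨i, hi⟩ := exists_eq_ciInf_of_finite (f := hH2.eigenvalues)
      obtain ⟨j, hj⟩ := exists_eq_ciSup_of_finite (f := hH2.eigenvalues)
      have hbi : hH2.eigenvalues i < 0 := by rw [hi]; exact hmin
      have haj : 1 ≤ hH2.eigenvalues j := by rw [hj]; exact hmax
      obtain ⟨σ1, σ2, h1, h2, h3, h4, h5, h6, h7, h8, h9⟩ := aux_construct hH2 hbi haj
      refine ⟨σ2, σ1, h4, h5, h6, h1, h2, h3, ?_, h8, ?_, h7, ?_⟩
      · rw [hM1eq, Matrix.mul_sub, Matrix.mul_one, Matrix.trace_sub, h5, h8]; ring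
      · rw [hM1eq, Matrix.mul_sub, Matrix.mul_one, Matrix.trace_sub, h2, h7]; ring
      · rw [Matrix.trace_mul_comm]; exact h9
  · rintro ⟨ρ1, ρ2, hρ1, hρ1t, _, hρ2, hρ2t, _, h11, h12, h21, h22, hpos⟩
    by_contra hc
    push_neg at hc
    obtain ⟨hc1, hc2⟩ := hc
    -- bounds from traces
    have hb11 := aux_trace_bound hρ1 hρ1t hH1 (c := 1) (by exact_mod_cast h11)
    have hb21 := aux_trace_bound hρ2 hρ2t hH1 (c := 0) (by exact_mod_cast h21)
    have hb22 := aux_trace_bound hρ2 hρ2t hH2 (c := 1) (by exact_mod_cast h22)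
    have hmax1 : 1 ≤ lambdaMax M1 := by rw [hlmax1]; exact hb11.2
    have hmax2 : 1 ≤ lambdaMax M2 := by rw [hlmax2]; exact hb22.2
    have hmin1 : 0 ≤ lambdaMin M1 := by
      by_contra h
      push_neg at h
      exact absurd hmax1 (not_le.mpr (hc1 h))
    have hmin2 : 0 ≤ lambdaMin M2 := by
      by_contra h
      push_neg at h
      exact absurd hmax2 (not_le.mpr (hc2 h))
    -- M1 and M2 are PSD
    have hpsd1 : M1.PosSemidef := by
      apply hH1.posSemidef_iff_eigenvalues_nonneg.mpr
      intro k
      refine le_trans ?_ (ciInf_le (Finite.bddBelow_range _) k)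
      rw [← hlmin1]; exact hmin1
    have hpsd2 : M2.PosSemidef := by
      apply hH2.posSemidef_iff_eigenvalues_nonneg.mpr
      intro k
      refine le_trans ?_ (ciInf_le (Finite.bddBelow_range _) k)
      rw [← hlmin2]; exact hmin2
    -- annihilation
    have hz1 : ρ1 * M2 = 0 := aux_psd_trace_mul_eq_zero hρ1 hpsd2 h12
    have hz2 : M1 * ρ2 = 0 := by
      apply aux_psd_trace_mul_eq_zero hpsd1 hρ2
      rw [Matrix.trace_mul_comm]; exact h21
    have hρ1M1 : ρ1 * M1 = ρ1 := by
      have : ρ1 * (M1 + M2) = ρ1 := by rw [hsum, Matrix.mul_one]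
      rw [Matrix.mul_add, hz1, add_zero] at this
      exact this
    have : ρ1 * ρ2 = 0 := by
      calc ρ1 * ρ2 = (ρ1 * M1) * ρ2 := by rw [hρ1M1]
      _ = ρ1 * (M1 * ρ2) := by rw [Matrix.mul_assoc]
      _ = 0 := by rw [hz2, Matrix.mul_zero]
    rw [this, Matrix.trace_zero] at hpos
    exact lt_irrefl 0 hpos
end

section
/- Let (M1, M2) be a two-outcome DOVM. The following are equivalent: (1) (M1, M2) is BQ or AQ, i.e., some M_i satisfies λ_min(M_i) < 0 and λ_max(M_i) > 1 + λ_min(M_i); (2) there exist states ρ1 and ρ2 (positive semidefinite matrices of trace 1) such that Tr(ρ1 · M2) + Tr(ρ2 · M1) < 1 − (1/2)·‖ρ1 − ρ2‖₁. Moreover, if (1) holds, the states ρ1 and ρ2 in (2) can be chosen to lie in the separable cone SEP. -/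
open Kronecker ComplexOrder

/-- Trace norm of a Hermitian matrix: sum of absolute values of eigenvalues
(junk value `0` otherwise). -/
noncomputable def traceNorm {ι : Type*} [Fintype ι] [DecidableEq ι]
    (M : Matrix ι ι ℂ) : ℝ :=
  if h : M.IsHermitian then ∑ i, |h.eigenvalues i| else 0

/-- The cone of separable matrices. -/
def SEPcone (dA dB : ℕ) : Set (Matrix (Fin dA × Fin dB) (Fin dA × Fin dB) ℂ) :=
  {X | ∃ (m : ℕ) (a : Fin m → Matrix (Fin dA) (Fin dA) ℂ)
      (b : Fin m → Matrix (Fin dB) (Fin dB) ℂ),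
      (∀ i, (a i).PosSemidef) ∧ (∀ i, (b i).PosSemidef) ∧ X = ∑ i, a i ⊗ₖ b i}

section Helper
open Matrix
set_option linter.unusedSectionVars false
set_option maxHeartbeats 1000000

namespace DOVMHelper
variable {ι : Type*} [Fintype ι] [DecidableEq ι] {X Y A B : Matrix ι ι ℂ}

lemma psd_diag_nonneg (hY : Y.PosSemidef) (i : ι) : 0 ≤ Y i i := by
  exact hY.diag_nonneg

lemma nonneg_trace (hY : Y.PosSemidef) : 0 ≤ Y.trace :=
  Finset.sum_nonneg fun i _ => psd_diag_nonneg hY i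

lemma trace_eq_re (hY : Y.PosSemidef) : Y.trace = ((Y.trace.re : ℝ) : ℂ) := by
  have h := nonneg_trace hY
  rw [Complex.nonneg_iff] at h
  exact Complex.ext rfl h.2.symm

lemma trace_re_nonneg (hY : Y.PosSemidef) : 0 ≤ Y.trace.re := by
  have h := nonneg_trace hY
  rw [Complex.nonneg_iff] at h
  exact h.1

lemma psd_smul {r : ℝ} (hr : 0 ≤ r) (hY : Y.PosSemidef) : ((r : ℂ) • Y).PosSemidef := by
  exact hY.smul (Complex.zero_le_real.mpr hr)

lemma lambdaMin_le [Nonempty ι] (hX : X.IsHermitian) (i : ι) :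
    lambdaMin X ≤ hX.eigenvalues i := by
  rw [lambdaMin, dif_pos hX]
  exact ciInf_le (Set.Finite.bddBelow (Set.finite_range _)) i

lemma le_lambdaMax [Nonempty ι] (hX : X.IsHermitian) (i : ι) :
    hX.eigenvalues i ≤ lambdaMax X := by
  rw [lambdaMax, dif_pos hX]
  exact le_ciSup (Set.Finite.bddAbove (Set.finite_range _)) i

lemma exists_lambdaMax [Nonempty ι] (hX : X.IsHermitian) :
    ∃ i, hX.eigenvalues i = lambdaMax X := by
  obtain ⟨i, hi⟩ := Finite.exists_max hX.eigenvalues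
  refine ⟨i, le_antisymm (le_lambdaMax hX i) ?_⟩
  rw [lambdaMax, dif_pos hX]
  exact ciSup_le hi

lemma exists_lambdaMin [Nonempty ι] (hX : X.IsHermitian) :
    ∃ i, hX.eigenvalues i = lambdaMin X := by
  obtain ⟨i, hi⟩ := Finite.exists_min hX.eigenvalues
  refine ⟨i, le_antisymm ?_ (lambdaMin_le hX i)⟩
  rw [lambdaMin, dif_pos hX]
  exact le_ciInf hi

lemma star_mul_self' (hX : X.IsHermitian) :
    (star (hX.eigenvectorUnitary : Matrix ι ι ℂ)) * (hX.eigenvectorUnitary : Matrix ι ι ℂ) = 1 :=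
  Unitary.coe_star_mul_self _

lemma mul_star_self' (hX : X.IsHermitian) :
    (hX.eigenvectorUnitary : Matrix ι ι ℂ) * (star (hX.eigenvectorUnitary : Matrix ι ι ℂ)) = 1 :=
  Unitary.coe_mul_star_self _

lemma trace_eq_sum (hX : X.IsHermitian) (Y : Matrix ι ι ℂ) :
    (X * Y).trace = ∑ i, (hX.eigenvalues i : ℂ) *
      ((star (hX.eigenvectorUnitary : Matrix ι ι ℂ)) * Y *
        (hX.eigenvectorUnitary : Matrix ι ι ℂ)) i i := by
  set U : Matrix ι ι ℂ := (hX.eigenvectorUnitary : Matrix ι ι ℂ) with hU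
  have h1 : X * Y = U * (diagonal (RCLike.ofReal ∘ hX.eigenvalues) * (star U * Y)) := by
    conv_lhs => rw [hX.spectral_theorem]
    simp [Matrix.mul_assoc, hU]
  rw [h1, Matrix.trace_mul_comm, Matrix.mul_assoc]
  simp [Matrix.trace, Matrix.diag, Matrix.diagonal_mul]

/-- Workhorse: `(X*Y).trace` as a real combination with nonnegative weights. -/
lemma trace_decomp (hX : X.IsHermitian) (hY : Y.PosSemidef) :
    ∃ q : ι → ℝ, (∀ i, 0 ≤ q i) ∧ (∑ i, q i) = Y.trace.re ∧
      (X * Y).trace = ((∑ i, hX.eigenvalues i * q i : ℝ) : ℂ) := by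
  set U : Matrix ι ι ℂ := (hX.eigenvectorUnitary : Matrix ι ι ℂ) with hU
  have hconj : (star U * Y * U).PosSemidef := by
    have := hY.mul_mul_conjTranspose_same (star U)
    simpa [Matrix.mul_assoc, Matrix.star_eq_conjTranspose, Matrix.conjTranspose_conjTranspose]
      using this
  refine ⟨fun i => ((star U * Y * U) i i).re, fun i => ?_, ?_, ?_⟩
  · exact (Complex.nonneg_iff.mp (psd_diag_nonneg hconj i)).1
  · have htr : (star U * Y * U).trace = Y.trace := by
      rw [Matrix.trace_mul_comm, ← Matrix.mul_assoc, mul_star_self' hX, Matrix.one_mul]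
    calc (∑ i, ((star U * Y * U) i i).re) = ((star U * Y * U).trace).re := by
          rw [Matrix.trace]; exact (Complex.re_sum _ _).symm
      _ = Y.trace.re := by rw [htr]
  · rw [trace_eq_sum hX]
    push_cast
    refine Finset.sum_congr rfl fun i _ => ?_
    have h := psd_diag_nonneg hconj i
    rw [Complex.nonneg_iff] at h
    congr 1
    exact Complex.ext rfl h.2.symm

lemma trace_mul_bounds [Nonempty ι] (hX : X.IsHermitian) (hY : Y.PosSemidef) :
    (X * Y).trace = (((X * Y).trace.re : ℝ) : ℂ) ∧
    lambdaMin X * Y.trace.re ≤ ((X * Y).trace).re ∧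
    ((X * Y).trace).re ≤ lambdaMax X * Y.trace.re := by
  obtain ⟨q, hq0, hqs, hsum⟩ := trace_decomp hX hY
  have hre : ((X * Y).trace).re = ∑ i, hX.eigenvalues i * q i := by rw [hsum, Complex.ofReal_re]
  refine ⟨by rw [hre, ← hsum], ?_, ?_⟩
  · rw [hre, ← hqs, Finset.mul_sum]
    exact Finset.sum_le_sum fun i _ =>
      mul_le_mul_of_nonneg_right (lambdaMin_le hX i) (hq0 i)
  · rw [hre, ← hqs, Finset.mul_sum]
    exact Finset.sum_le_sum fun i _ =>
      mul_le_mul_of_nonneg_right (le_lambdaMax hX i) (hq0 i)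

/-- A "projector state" witnessing eigenvalue `k`. -/
lemma exists_state (hX : X.IsHermitian) (k : ι) :
    ∃ W : Matrix ι ι ℂ, W.PosSemidef ∧ W.trace = 1 ∧
      (W * X).trace = ((hX.eigenvalues k : ℝ) : ℂ) := by
  set U : Matrix ι ι ℂ := (hX.eigenvectorUnitary : Matrix ι ι ℂ) with hU
  refine ⟨U * diagonal (Pi.single k 1) * star U, ?_, ?_, ?_⟩
  · have hd : Matrix.PosSemidef (diagonal (Pi.single k (1:ℂ))) := by
      refine Matrix.PosSemidef.diagonal ?_
      intro i
      rcases eq_or_ne i k with rfl | h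
      · simp
      · simp [Pi.single_apply, h]
    simpa [Matrix.star_eq_conjTranspose] using hd.mul_mul_conjTranspose_same U
  · rw [Matrix.trace_mul_comm, ← Matrix.mul_assoc, star_mul_self' hX, Matrix.one_mul,
      Matrix.trace_diagonal]
    simp
  · have hXe : X = U * diagonal (RCLike.ofReal ∘ hX.eigenvalues) * star U := hX.spectral_theorem
    conv_lhs => rw [hXe]
    have cancel : star U * U = 1 := star_mul_self' hX
    have : U * diagonal (Pi.single k 1) * star U *
          (U * diagonal (RCLike.ofReal ∘ hX.eigenvalues) * star U)
        = U * (diagonal (Pi.single k 1) * diagonal (RCLike.ofReal ∘ hX.eigenvalues)) * star U := by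
      simp only [Matrix.mul_assoc]
      rw [← Matrix.mul_assoc (star U) U, cancel, Matrix.one_mul]
    rw [this, Matrix.diagonal_mul_diagonal, Matrix.trace_mul_comm, ← Matrix.mul_assoc,
      star_mul_self' hX, Matrix.one_mul, Matrix.trace_diagonal]
    rw [Finset.sum_eq_single k]
    · simp
    · intro b _ hb; simp [Pi.single_apply, hb]
    · intro h; exact absurd (Finset.mem_univ k) h

/-- Positive/negative decomposition of a Hermitian matrix. -/
lemma exists_posneg (hX : X.IsHermitian) :
    ∃ P N : Matrix ι ι ℂ, P.PosSemidef ∧ N.PosSemidef ∧ X = P - N ∧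
      (P.trace).re - (N.trace).re = (X.trace).re ∧
      (P.trace).re + (N.trace).re = traceNorm X := by
  set U : Matrix ι ι ℂ := (hX.eigenvectorUnitary : Matrix ι ι ℂ) with hU
  set dp : ι → ℝ := fun i => max (hX.eigenvalues i) 0 with hdp
  set dn : ι → ℝ := fun i => max (-hX.eigenvalues i) 0 with hdn
  have trdiag : ∀ d : ι → ℝ, (U * diagonal (fun i => ((d i : ℝ) : ℂ)) * star U).trace
      = ((∑ i, d i : ℝ) : ℂ) := by
    intro d
    rw [Matrix.trace_mul_comm, ← Matrix.mul_assoc, star_mul_self' hX, Matrix.one_mul,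
      Matrix.trace_diagonal]
    push_cast; rfl
  have hpsd : ∀ d : ι → ℝ, (∀ i, 0 ≤ d i) →
      (U * diagonal (fun i => ((d i : ℝ) : ℂ)) * star U).PosSemidef := by
    intro d hd
    have : Matrix.PosSemidef (diagonal (fun i => ((d i : ℝ) : ℂ))) :=
      Matrix.PosSemidef.diagonal (by
        rw [Pi.le_def]
        intro i
        simp only [Pi.zero_apply]
        rw [Complex.nonneg_iff]
        exact ⟨by simpa using hd i, by simp⟩)
    simpa [Matrix.star_eq_conjTranspose] using this.mul_mul_conjTranspose_same U
  refine ⟨U * diagonal (fun i => ((dp i : ℝ) : ℂ)) * star U,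
          U * diagonal (fun i => ((dn i : ℝ) : ℂ)) * star U,
          hpsd dp (fun i => le_max_right _ _), hpsd dn (fun i => le_max_right _ _), ?_, ?_, ?_⟩
  · have : X = U * diagonal (RCLike.ofReal ∘ hX.eigenvalues) * star U := hX.spectral_theorem
    rw [this, ← Matrix.sub_mul, ← Matrix.mul_sub]
    congr 2
    ext i j
    rcases eq_or_ne i j with rfl | h
    · simp only [Matrix.sub_apply, Matrix.diagonal_apply_eq, Function.comp_apply]
      rw [← Complex.ofReal_sub, max_zero_sub_max_neg_zero_eq_self]
      rfl
    · simp [Matrix.diagonal_apply_ne _ h]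
  · rw [trdiag dp, trdiag dn]
    have htrX : (X.trace).re = ∑ i, hX.eigenvalues i := by
      have h1 : (X * 1).trace = _ := trace_eq_sum hX 1
      rw [Matrix.mul_one] at h1
      rw [h1]
      rw [Matrix.mul_one, star_mul_self' hX]
      simp [Complex.re_sum]
    rw [htrX]
    simp only [Complex.ofReal_re]
    rw [← Finset.sum_sub_distrib]
    exact Finset.sum_congr rfl fun i _ => max_zero_sub_max_neg_zero_eq_self _
  · rw [trdiag dp, trdiag dn, traceNorm, dif_pos hX]
    simp only [Complex.ofReal_re]
    rw [← Finset.sum_add_distrib]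
    refine Finset.sum_congr rfl fun i _ => ?_
    rw [hdp, hdn]
    rcases le_total 0 (hX.eigenvalues i) with h | h
    · rw [abs_of_nonneg h]; simp [max_eq_left, h, neg_nonpos.mpr h]
    · rw [abs_of_nonpos h]; simp [max_eq_right, h, neg_nonneg.mpr h]

/-- Trace norm of a difference of psd matrices is at most the sum of traces. -/
lemma traceNorm_sub_le (hA : A.PosSemidef) (hB : B.PosSemidef) :
    traceNorm (A - B) ≤ (A.trace).re + (B.trace).re := by
  have hX : (A - B).IsHermitian := hA.1.sub hB.1
  set U : Matrix ι ι ℂ := (hX.eigenvectorUnitary : Matrix ι ι ℂ) with hU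
  have hdiag : star U * (A - B) * U = diagonal (RCLike.ofReal ∘ hX.eigenvalues) :=
    by have h := hX.conjStarAlgAut_star_eigenvectorUnitary
       rw [Unitary.conjStarAlgAut_star_apply] at h
       exact h
  have hconjA : (star U * A * U).PosSemidef := by
    have := hA.mul_mul_conjTranspose_same (star U)
    simpa [Matrix.mul_assoc, Matrix.star_eq_conjTranspose, Matrix.conjTranspose_conjTranspose]
      using this
  have hconjB : (star U * B * U).PosSemidef := by
    have := hB.mul_mul_conjTranspose_same (star U)
    simpa [Matrix.mul_assoc, Matrix.star_eq_conjTranspose, Matrix.conjTranspose_conjTranspose]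
      using this
  have hentry : ∀ i, hX.eigenvalues i
      = ((star U * A * U) i i).re - ((star U * B * U) i i).re := by
    intro i
    have h1 : (star U * (A - B) * U) i i = ((hX.eigenvalues i : ℝ) : ℂ) := by
      rw [hdiag]; simp
    have h2 : (star U * (A - B) * U) i i = (star U * A * U) i i - (star U * B * U) i i := by
      rw [Matrix.mul_sub, Matrix.sub_mul]; simp
    have := congrArg Complex.re (h1.symm.trans h2)
    simpa using this
  have htrA : ∑ i, ((star U * A * U) i i).re = (A.trace).re := by
    have htr : (star U * A * U).trace = A.trace := by
      rw [Matrix.trace_mul_comm, ← Matrix.mul_assoc, mul_star_self' hX, Matrix.one_mul]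
    rw [← htr, Matrix.trace, Complex.re_sum]; rfl
  have htrB : ∑ i, ((star U * B * U) i i).re = (B.trace).re := by
    have htr : (star U * B * U).trace = B.trace := by
      rw [Matrix.trace_mul_comm, ← Matrix.mul_assoc, mul_star_self' hX, Matrix.one_mul]
    rw [← htr, Matrix.trace, Complex.re_sum]; rfl
  rw [traceNorm, dif_pos hX, ← htrA, ← htrB, ← Finset.sum_add_distrib]
  refine Finset.sum_le_sum fun i _ => ?_
  rw [hentry i]
  have ha : 0 ≤ ((star U * A * U) i i).re := (Complex.nonneg_iff.mp (psd_diag_nonneg hconjA i)).1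
  have hb : 0 ≤ ((star U * B * U) i i).re := (Complex.nonneg_iff.mp (psd_diag_nonneg hconjB i)).1
  rw [abs_sub_le_iff]
  constructor <;> linarith

/-- The key upper/lower bound for a traceless Hermitian matrix against a
Hermitian matrix with small spectral spread. -/
lemma trace_bound [Nonempty ι] {Δ M : Matrix ι ι ℂ} (hΔ : Δ.IsHermitian) (hΔ0 : Δ.trace = 0)
    (hM : M.IsHermitian) (h : lambdaMax M - lambdaMin M ≤ 1) :
    ((Δ * M).trace).re ≤ traceNorm Δ / 2 ∧ -(traceNorm Δ / 2) ≤ ((Δ * M).trace).re := by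
  obtain ⟨P, N, hP, hN, hPN, hsub, hadd⟩ := exists_posneg hΔ
  have h0 : (Δ.trace).re = 0 := by rw [hΔ0]; simp
  have htP : (P.trace).re = traceNorm Δ / 2 := by linarith
  have htN : (N.trace).re = traceNorm Δ / 2 := by linarith
  have ht0 : 0 ≤ traceNorm Δ / 2 := htP ▸ trace_re_nonneg hP
  have hsplit : (Δ * M).trace = (P * M).trace - (N * M).trace := by
    rw [hPN, Matrix.sub_mul, Matrix.trace_sub]
  have hPb := trace_mul_bounds hM hP
  have hNb := trace_mul_bounds hM hN
  have hcP : ((P * M).trace).re = ((M * P).trace).re := by rw [Matrix.trace_mul_comm]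
  have hcN : ((N * M).trace).re = ((M * N).trace).re := by rw [Matrix.trace_mul_comm]
  have hre : ((Δ * M).trace).re = ((P * M).trace).re - ((N * M).trace).re := by
    rw [hsplit, Complex.sub_re]
  rw [hre, hcP, hcN]
  obtain ⟨-, hPlo, hPhi⟩ := hPb
  obtain ⟨-, hNlo, hNhi⟩ := hNb
  rw [htP] at hPlo hPhi
  rw [htN] at hNlo hNhi
  constructor <;> nlinarith [ht0]

section SEP
open Matrix Kronecker

lemma conjTranspose_kron {l m n p : Type*} (a : Matrix l m ℂ) (b : Matrix n p ℂ) :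
    (a ⊗ₖ b)ᴴ = aᴴ ⊗ₖ bᴴ := by
  ext ⟨i, k⟩ ⟨j, l⟩
  simp [Matrix.conjTranspose_apply, Matrix.kroneckerMap_apply]

lemma kron_psd {m n : Type*} [Fintype m] [Fintype n] {a : Matrix m m ℂ} {b : Matrix n n ℂ}
    (ha : a.PosSemidef) (hb : b.PosSemidef) : (a ⊗ₖ b).PosSemidef := by
  exact ha.kronecker hb

lemma psd_sum {κ m : Type*} [Fintype κ] [Fintype m] [DecidableEq κ] (f : m → Matrix κ κ ℂ)
    (hf : ∀ i, (f i).PosSemidef) : (∑ i : m, f i).PosSemidef := by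
  classical
  exact Finset.sum_induction f Matrix.PosSemidef (fun a b ha hb => ha.add hb)
    Matrix.PosSemidef.zero (fun i _ => hf i)

lemma SEPcone_psd {dA dB : ℕ} {X : Matrix (Fin dA × Fin dB) (Fin dA × Fin dB) ℂ}
    (hX : X ∈ SEPcone dA dB) : X.PosSemidef := by
  obtain ⟨m, a, b, ha, hb, rfl⟩ := hX
  exact psd_sum _ fun i => kron_psd (ha i) (hb i)

lemma SEPcone_smul {dA dB : ℕ} {X : Matrix (Fin dA × Fin dB) (Fin dA × Fin dB) ℂ}
    (hX : X ∈ SEPcone dA dB) {r : ℝ} (hr : 0 ≤ r) : ((r : ℂ) • X) ∈ SEPcone dA dB := by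
  obtain ⟨m, a, b, ha, hb, rfl⟩ := hX
  refine ⟨m, fun i => ((r : ℂ)) • a i, b, fun i => psd_smul hr (ha i), hb, ?_⟩
  rw [Finset.smul_sum]
  exact Finset.sum_congr rfl fun i _ => (Matrix.smul_kronecker _ _ _).symm

lemma span_psd {n : ℕ} (A : Matrix (Fin n) (Fin n) ℂ) :
    A ∈ Submodule.span ℂ {a : Matrix (Fin n) (Fin n) ℂ | a.PosSemidef} := by
  have herm : ∀ H : Matrix (Fin n) (Fin n) ℂ, H.IsHermitian →
      H ∈ Submodule.span ℂ {a : Matrix (Fin n) (Fin n) ℂ | a.PosSemidef} := by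
    intro H hH
    obtain ⟨P, N, hP, hN, hPN, -, -⟩ := exists_posneg hH
    rw [hPN]
    exact Submodule.sub_mem _ (Submodule.subset_span hP) (Submodule.subset_span hN)
  have hH1 : (((1:ℂ)/2) • (A + Aᴴ)).IsHermitian := by
    rw [Matrix.IsHermitian, Matrix.conjTranspose_smul, Matrix.conjTranspose_add,
      Matrix.conjTranspose_conjTranspose]
    simp [add_comm]
  have hH2 : ((Complex.I/2) • (Aᴴ - A)).IsHermitian := by
    rw [Matrix.IsHermitian, Matrix.conjTranspose_smul, Matrix.conjTranspose_sub,
      Matrix.conjTranspose_conjTranspose]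
    rw [show star (Complex.I/2) = -(Complex.I/2) by
      simp [Complex.star_def, Complex.ext_iff]
      norm_num]
    rw [neg_smul, ← smul_neg, neg_sub]
  have h1 : ((1:ℂ)/2) • (A + Aᴴ) + Complex.I • ((Complex.I/2) • (Aᴴ - A)) = A := by
    ext i j
    simp only [Matrix.add_apply, Matrix.smul_apply, Matrix.sub_apply, smul_eq_mul]
    have hI := Complex.I_mul_I
    linear_combination (Aᴴ i j - A i j) / 2 * hI
  rw [← h1]
  exact Submodule.add_mem _ (herm _ hH1) (Submodule.smul_mem _ _ (herm _ hH2))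

lemma kron_mem_span {dA dB : ℕ} (A : Matrix (Fin dA) (Fin dA) ℂ) (B : Matrix (Fin dB) (Fin dB) ℂ) :
    A ⊗ₖ B ∈ Submodule.span ℂ {y : Matrix (Fin dA × Fin dB) (Fin dA × Fin dB) ℂ |
      ∃ a b, a.PosSemidef ∧ b.PosSemidef ∧ y = a ⊗ₖ b} := by
  have step1 : ∀ a : Matrix (Fin dA) (Fin dA) ℂ, a.PosSemidef →
      a ⊗ₖ B ∈ Submodule.span ℂ {y : Matrix (Fin dA × Fin dB) (Fin dA × Fin dB) ℂ |
        ∃ a b, a.PosSemidef ∧ b.PosSemidef ∧ y = a ⊗ₖ b} := by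
    intro a ha
    refine Submodule.span_induction ?_ ?_ ?_ ?_ (span_psd B)
    · intro b hb; exact Submodule.subset_span ⟨a, b, ha, hb, rfl⟩
    · rw [Matrix.kronecker_zero]; exact Submodule.zero_mem _
    · intro x y _ _ hx hy; rw [Matrix.kronecker_add]; exact Submodule.add_mem _ hx hy
    · intro c x _ hx; rw [Matrix.kronecker_smul]; exact Submodule.smul_mem _ _ hx
  refine Submodule.span_induction ?_ ?_ ?_ ?_ (span_psd A)
  · intro a ha; exact step1 a ha
  · rw [Matrix.zero_kronecker]; exact Submodule.zero_mem _
  · intro x y _ _ hx hy; rw [Matrix.add_kronecker]; exact Submodule.add_mem _ hx hy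
  · intro c x _ hx; rw [Matrix.smul_kronecker]; exact Submodule.smul_mem _ _ hx

lemma std_kron {dA dB : ℕ} (i j : Fin dA) (k l : Fin dB) (c : ℂ) :
    Matrix.single (i,k) (j,l) c
      = c • (Matrix.single i j 1 ⊗ₖ Matrix.single k l 1) := by
  ext ⟨i', k'⟩ ⟨j', l'⟩
  simp only [Matrix.single, Matrix.kroneckerMap_apply, Matrix.smul_apply,
    Matrix.of_apply, smul_eq_mul, Prod.mk.injEq]
  by_cases h1 : i = i' <;> by_cases h2 : j = j' <;> by_cases h3 : k = k' <;>
    by_cases h4 : l = l' <;> simp [h1, h2, h3, h4]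

lemma mem_span_prod {dA dB : ℕ} (X : Matrix (Fin dA × Fin dB) (Fin dA × Fin dB) ℂ) :
    X ∈ Submodule.span ℂ {y : Matrix (Fin dA × Fin dB) (Fin dA × Fin dB) ℂ |
      ∃ a b, a.PosSemidef ∧ b.PosSemidef ∧ y = a ⊗ₖ b} := by
  rw [Matrix.matrix_eq_sum_single X]
  refine Submodule.sum_mem _ fun p _ => Submodule.sum_mem _ fun q _ => ?_
  obtain ⟨i, k⟩ := p
  obtain ⟨j, l⟩ := q
  rw [std_kron]
  exact Submodule.smul_mem _ _ (kron_mem_span _ _)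

lemma exists_sep_decomp {dA dB : ℕ} {X : Matrix (Fin dA × Fin dB) (Fin dA × Fin dB) ℂ}
    (hX : X.IsHermitian) :
    ∃ P N, P ∈ SEPcone dA dB ∧ N ∈ SEPcone dA dB ∧ X = P - N := by
  obtain ⟨n, f, g, hsum⟩ := Submodule.mem_span_set'.mp (mem_span_prod X)
  choose a b ha hb hg using fun i => (g i).2
  set c : Fin n → ℝ := fun i => (f i).re with hc
  have hX2 : X = ∑ i, ((c i : ℂ)) • (a i ⊗ₖ b i) := by
    have hXh : Xᴴ = ∑ i, (starRingEnd ℂ) (f i) • (a i ⊗ₖ b i) := by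
      rw [← hsum]
      rw [Matrix.conjTranspose_sum]
      refine Finset.sum_congr rfl fun i _ => ?_
      rw [hg i, Matrix.conjTranspose_smul, conjTranspose_kron, (ha i).1, (hb i).1]
      rfl
    have h2 : (2:ℂ) • X = X + Xᴴ := by rw [hX]; module
    have h3 : X + Xᴴ = ∑ i, ((f i + (starRingEnd ℂ) (f i))) • (a i ⊗ₖ b i) := by
      rw [hXh, ← hsum]
      rw [← Finset.sum_add_distrib]
      refine Finset.sum_congr rfl fun i _ => ?_
      rw [hg i, add_smul]
    have h4 : ∀ i, f i + (starRingEnd ℂ) (f i) = (2:ℂ) * (c i : ℂ) := by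
      intro i
      rw [Complex.add_conj]
      push_cast
      ring
    have h5 : (2:ℂ) • X = (2:ℂ) • ∑ i, ((c i : ℂ)) • (a i ⊗ₖ b i) := by
      rw [h2, h3, Finset.smul_sum]
      refine Finset.sum_congr rfl fun i _ => ?_
      rw [h4 i, mul_smul]
    exact smul_right_injective _ (two_ne_zero (α := ℂ)) h5
  refine ⟨∑ i, (((max (c i) 0 : ℝ) : ℂ) • a i) ⊗ₖ b i,
          ∑ i, (((max (-c i) 0 : ℝ) : ℂ) • a i) ⊗ₖ b i,
          ⟨n, _, b, fun i => psd_smul (le_max_right _ _) (ha i), hb, rfl⟩,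
          ⟨n, _, b, fun i => psd_smul (le_max_right _ _) (ha i), hb, rfl⟩, ?_⟩
  rw [hX2, ← Finset.sum_sub_distrib]
  refine Finset.sum_congr rfl fun i _ => ?_
  rw [Matrix.smul_kronecker, Matrix.smul_kronecker, ← sub_smul, ← Complex.ofReal_sub,
    max_zero_sub_max_neg_zero_eq_self]

end SEP

/-- The key construction: from a Hermitian matrix with spectral spread `> 1`,
produce separable states witnessing the advantage. -/
lemma constr {dA dB : ℕ} [Nonempty (Fin dA × Fin dB)]
    {M : Matrix (Fin dA × Fin dB) (Fin dA × Fin dB) ℂ}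
    (hM : M.IsHermitian) (hspread : 1 < lambdaMax M - lambdaMin M) :
    ∃ ρ1 ρ2 : Matrix (Fin dA × Fin dB) (Fin dA × Fin dB) ℂ,
      ρ1.PosSemidef ∧ ρ1.trace = 1 ∧ ρ2.PosSemidef ∧ ρ2.trace = 1 ∧
      ρ1 ∈ SEPcone dA dB ∧ ρ2 ∈ SEPcone dA dB ∧
      traceNorm (ρ1 - ρ2) / 2 < ((ρ1 * M).trace).re - ((ρ2 * M).trace).re ∧
      traceNorm (ρ2 - ρ1) / 2 < ((ρ1 * M).trace).re - ((ρ2 * M).trace).re := by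
  obtain ⟨k, hk⟩ := exists_lambdaMax hM
  obtain ⟨l, hl⟩ := exists_lambdaMin hM
  obtain ⟨W, hWpsd, hWtr, hWM⟩ := exists_state hM k
  obtain ⟨V, hVpsd, hVtr, hVM⟩ := exists_state hM l
  have hDh : (W - V).IsHermitian := hWpsd.1.sub hVpsd.1
  obtain ⟨P, N, hPmem, hNmem, hPN⟩ := exists_sep_decomp hDh
  have hPpsd := SEPcone_psd hPmem
  have hNpsd := SEPcone_psd hNmem
  have htrPN : P.trace = N.trace := by
    have h : P.trace - N.trace = 0 := by
      rw [← Matrix.trace_sub, ← hPN, Matrix.trace_sub, hWtr, hVtr, sub_self]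
    exact sub_eq_zero.mp h
  set p : ℝ := (P.trace).re with hpdef
  have hPtr : P.trace = (p : ℂ) := trace_eq_re hPpsd
  have hNtr : N.trace = (p : ℂ) := by rw [← htrPN, hPtr]
  have hNp : (N.trace).re = p := by rw [hNtr]; simp
  set s : ℝ := lambdaMax M - lambdaMin M with hsdef
  have hDM : ((W - V) * M).trace = (s : ℂ) := by
    rw [Matrix.sub_mul, Matrix.trace_sub, hWM, hVM, hk, hl]
    norm_cast
  have hsplitC : ((W - V) * M).trace = (P * M).trace - (N * M).trace := by
    rw [hPN, Matrix.sub_mul, Matrix.trace_sub]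
  have hreval : ((P * M).trace).re - ((N * M).trace).re = s := by
    have := congrArg Complex.re (hsplitC.symm.trans hDM)
    simpa [Complex.sub_re] using this
  have hp0 : 0 < p := by
    rcases (trace_re_nonneg hPpsd).lt_or_eq with h | h
    · exact h
    · exfalso
      have hpe : (P.trace).re = 0 := h.symm
      have hne : (N.trace).re = 0 := by rw [hNp]; exact h.symm
      obtain ⟨-, hlo1, hhi1⟩ := trace_mul_bounds hM hPpsd
      obtain ⟨-, hlo2, hhi2⟩ := trace_mul_bounds hM hNpsd
      rw [hpe, mul_zero] at hlo1 hhi1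
      rw [hne, mul_zero] at hlo2 hhi2
      have e1 : ((P * M).trace).re = ((M * P).trace).re := by rw [Matrix.trace_mul_comm]
      have e2 : ((N * M).trace).re = ((M * N).trace).re := by rw [Matrix.trace_mul_comm]
      rw [e1, e2] at hreval
      linarith
  have hinv : (0:ℝ) ≤ p⁻¹ := inv_nonneg.mpr hp0.le
  have hinvpos : (0:ℝ) < p⁻¹ := inv_pos.mpr hp0
  refine ⟨((p⁻¹ : ℝ) : ℂ) • P, ((p⁻¹ : ℝ) : ℂ) • N,
    psd_smul hinv hPpsd, ?_, psd_smul hinv hNpsd, ?_,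
    SEPcone_smul hPmem hinv, SEPcone_smul hNmem hinv, ?_, ?_⟩
  · rw [Matrix.trace_smul, hPtr, smul_eq_mul, ← Complex.ofReal_mul,
      inv_mul_cancel₀ hp0.ne', Complex.ofReal_one]
  · rw [Matrix.trace_smul, hNtr, smul_eq_mul, ← Complex.ofReal_mul,
      inv_mul_cancel₀ hp0.ne', Complex.ofReal_one]
  all_goals {
    have hval : (((((p⁻¹:ℝ):ℂ) • P) * M).trace).re - (((((p⁻¹:ℝ):ℂ) • N) * M).trace).re
        = p⁻¹ * s := by
      rw [Matrix.smul_mul, Matrix.smul_mul, Matrix.trace_smul, Matrix.trace_smul,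
        smul_eq_mul, smul_eq_mul, Complex.re_ofReal_mul, Complex.re_ofReal_mul,
        ← mul_sub, hreval]
    rw [hval]
    have eW : ((((p⁻¹:ℝ):ℂ) • W).trace).re = p⁻¹ := by
      rw [Matrix.trace_smul, hWtr, smul_eq_mul, mul_one, Complex.ofReal_re]
    have eV : ((((p⁻¹:ℝ):ℂ) • V).trace).re = p⁻¹ := by
      rw [Matrix.trace_smul, hVtr, smul_eq_mul, mul_one, Complex.ofReal_re]
    first
    | (have hdiff : ((p⁻¹:ℝ):ℂ) • P - ((p⁻¹:ℝ):ℂ) • N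
          = ((p⁻¹:ℝ):ℂ) • W - ((p⁻¹:ℝ):ℂ) • V := by
        rw [← smul_sub, ← smul_sub, ← hPN]
       have htn := traceNorm_sub_le (psd_smul hinv hWpsd) (psd_smul hinv hVpsd)
       rw [eW, eV] at htn
       rw [hdiff]
       nlinarith [htn, hinvpos, hspread])
    | (have hdiff : ((p⁻¹:ℝ):ℂ) • N - ((p⁻¹:ℝ):ℂ) • P
          = ((p⁻¹:ℝ):ℂ) • V - ((p⁻¹:ℝ):ℂ) • W := by
        rw [← smul_sub, ← smul_sub, show N - P = V - W by
          rw [← neg_sub P N, ← hPN, neg_sub]]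
       have htn := traceNorm_sub_le (psd_smul hinv hVpsd) (psd_smul hinv hWpsd)
       rw [eV, eW] at htn
       rw [hdiff]
       nlinarith [htn, hinvpos, hspread])
  }

end DOVMHelper
end Helper

theorem stmt_6 {dA dB : ℕ} (hdA : 2 ≤ dA) (hdB : 2 ≤ dB)
    (M1 M2 : Matrix (Fin dA × Fin dB) (Fin dA × Fin dB) ℂ)
    (hM1 : M1 ∈ SEPdual dA dB) (hM2 : M2 ∈ SEPdual dA dB)
    (hsum : M1 + M2 = 1) :
    (((lambdaMin M1 < 0 ∧ 1 + lambdaMin M1 < lambdaMax M1) ∨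
        (lambdaMin M2 < 0 ∧ 1 + lambdaMin M2 < lambdaMax M2)) ↔
      (∃ ρ1 ρ2 : Matrix (Fin dA × Fin dB) (Fin dA × Fin dB) ℂ,
        ρ1.PosSemidef ∧ ρ1.trace = 1 ∧ ρ2.PosSemidef ∧ ρ2.trace = 1 ∧
        ((ρ1 * M2).trace).re + ((ρ2 * M1).trace).re <
          1 - traceNorm (ρ1 - ρ2) / 2)) ∧
    (((lambdaMin M1 < 0 ∧ 1 + lambdaMin M1 < lambdaMax M1) ∨
        (lambdaMin M2 < 0 ∧ 1 + lambdaMin M2 < lambdaMax M2)) →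
      (∃ ρ1 ρ2 : Matrix (Fin dA × Fin dB) (Fin dA × Fin dB) ℂ,
        ρ1.PosSemidef ∧ ρ1.trace = 1 ∧ ρ2.PosSemidef ∧ ρ2.trace = 1 ∧
        ρ1 ∈ SEPcone dA dB ∧ ρ2 ∈ SEPcone dA dB ∧
        ((ρ1 * M2).trace).re + ((ρ2 * M1).trace).re <
          1 - traceNorm (ρ1 - ρ2) / 2)) := by
  have hdA0 : 0 < dA := by omega
  have hdB0 : 0 < dB := by omega
  haveI : Nonempty (Fin dA × Fin dB) := ⟨(⟨0, hdA0⟩, ⟨0, hdB0⟩)⟩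
  obtain ⟨hH1, hdual1⟩ := hM1
  obtain ⟨hH2, hdual2⟩ := hM2
  have hM2eq : M2 = 1 - M1 := eq_sub_of_add_eq' hsum
  have hM1eq : M1 = 1 - M2 := eq_sub_of_add_eq hsum
  have himp : ((lambdaMin M1 < 0 ∧ 1 + lambdaMin M1 < lambdaMax M1) ∨
        (lambdaMin M2 < 0 ∧ 1 + lambdaMin M2 < lambdaMax M2)) →
      (∃ ρ1 ρ2 : Matrix (Fin dA × Fin dB) (Fin dA × Fin dB) ℂ,
        ρ1.PosSemidef ∧ ρ1.trace = 1 ∧ ρ2.PosSemidef ∧ ρ2.trace = 1 ∧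
        ρ1 ∈ SEPcone dA dB ∧ ρ2 ∈ SEPcone dA dB ∧
        ((ρ1 * M2).trace).re + ((ρ2 * M1).trace).re <
          1 - traceNorm (ρ1 - ρ2) / 2) := by
    rintro (⟨h1, h2⟩ | ⟨h1, h2⟩)
    · obtain ⟨ρ1, ρ2, hp1, ht1, hp2, ht2, hm1, hm2, hineq, -⟩ :=
        DOVMHelper.constr hH1 (by linarith)
      refine ⟨ρ1, ρ2, hp1, ht1, hp2, ht2, hm1, hm2, ?_⟩
      have e1 : ((ρ1 * M2).trace).re = 1 - ((ρ1 * M1).trace).re := by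
        rw [hM2eq, Matrix.mul_sub, Matrix.mul_one, Matrix.trace_sub, ht1]
        simp [Complex.sub_re]
      rw [e1]
      linarith
    · obtain ⟨σ1, σ2, hp1, ht1, hp2, ht2, hm1, hm2, -, hineq⟩ :=
        DOVMHelper.constr hH2 (by linarith)
      refine ⟨σ2, σ1, hp2, ht2, hp1, ht1, hm2, hm1, ?_⟩
      have e1 : ((σ1 * M1).trace).re = 1 - ((σ1 * M2).trace).re := by
        rw [hM1eq, Matrix.mul_sub, Matrix.mul_one, Matrix.trace_sub, ht1]
        simp [Complex.sub_re]
      rw [e1]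
      linarith
  refine ⟨⟨fun h => ?_, fun h => ?_⟩, himp⟩
  · obtain ⟨ρ1, ρ2, a1, a2, a3, a4, -, -, hlt⟩ := himp h
    exact ⟨ρ1, ρ2, a1, a2, a3, a4, hlt⟩
  · by_contra hnot
    push_neg at hnot
    obtain ⟨ρ1, ρ2, hp1, ht1, hp2, ht2, hlt⟩ := h
    have hsp : lambdaMax M1 - lambdaMin M1 ≤ 1 ∨ lambdaMax M2 - lambdaMin M2 ≤ 1 := by
      rcases le_or_gt (lambdaMax M1 - lambdaMin M1) 1 with h | hs1
      · exact Or.inl h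
      rcases le_or_gt (lambdaMax M2 - lambdaMin M2) 1 with h | hs2
      · exact Or.inr h
      exfalso
      have ha1 : 0 ≤ lambdaMin M1 := by
        by_contra hc
        push_neg at hc
        have := hnot.1 hc
        linarith
      have ha2 : 0 ≤ lambdaMin M2 := by
        by_contra hc
        push_neg at hc
        have := hnot.2 hc
        linarith
      obtain ⟨k, hk⟩ := DOVMHelper.exists_lambdaMax hH1
      obtain ⟨W, hWpsd, hWtr, hWM⟩ := DOVMHelper.exists_state hH1 k
      have hWre : (W.trace).re = 1 := by rw [hWtr]; simp
      obtain ⟨-, hlo, -⟩ := DOVMHelper.trace_mul_bounds hH2 hWpsd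
      rw [hWre, mul_one] at hlo
      have e : ((M2 * W).trace).re = 1 - lambdaMax M1 := by
        rw [Matrix.trace_mul_comm, hM2eq, Matrix.mul_sub, Matrix.mul_one,
          Matrix.trace_sub, hWtr, hWM, hk]
        simp [Complex.sub_re]
      rw [e] at hlo
      linarith
    have hDh : (ρ1 - ρ2).IsHermitian := hp1.1.sub hp2.1
    have hD0 : (ρ1 - ρ2).trace = 0 := by rw [Matrix.trace_sub, ht1, ht2, sub_self]
    have hkey : ((ρ1 * M2).trace).re + ((ρ2 * M1).trace).re
        = 1 - (((ρ1 - ρ2) * M1).trace).re := by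
      have l1 : ((ρ1 * M2).trace).re = 1 - ((ρ1 * M1).trace).re := by
        rw [hM2eq, Matrix.mul_sub, Matrix.mul_one, Matrix.trace_sub, ht1]
        simp [Complex.sub_re]
      have l2 : (((ρ1 - ρ2) * M1).trace).re
          = ((ρ1 * M1).trace).re - ((ρ2 * M1).trace).re := by
        rw [Matrix.sub_mul, Matrix.trace_sub]
        simp [Complex.sub_re]
      rw [l1, l2]
      ring
    rcases hsp with h | h
    · have hb := DOVMHelper.trace_bound hDh hD0 hH1 h
      rw [hkey] at hlt
      linarith [hb.1]
    · have hb := DOVMHelper.trace_bound hDh hD0 hH2 h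
      have e : (((ρ1 - ρ2) * M1).trace).re = -((((ρ1 - ρ2) * M2).trace).re) := by
        rw [hM1eq, Matrix.mul_sub, Matrix.mul_one, Matrix.trace_sub, hD0]
        simp [Complex.sub_re]
      rw [hkey, e] at hlt
      linarith [hb.2]
end

section
/- Let C be a proper positive cone in the real inner product space of Hermitian (dA·dB)×(dA·dB) matrices satisfying SEP ⊆ C ⊆ SEP*. Suppose C is invariant under global unitary conjugation, i.e., for every (dA·dB)×(dA·dB) unitary matrix U one has {Uᴴ X U : X ∈ C} = C. Then C = SES. -/
open Kronecker Pointwise ComplexOrder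

/-- The real vector space of Hermitian matrices on `ℂ^{dA} ⊗ ℂ^{dB}`. -/
noncomputable abbrev HermM (dA dB : ℕ) :=
  selfAdjoint (Matrix (Fin dA × Fin dB) (Fin dA × Fin dB) ℂ)

/-- `SEP*` inside the space of Hermitian matrices. -/
def SEPdualH (dA dB : ℕ) : Set (HermM dA dB) :=
  {x | ∀ (a : Matrix (Fin dA) (Fin dA) ℂ) (b : Matrix (Fin dB) (Fin dB) ℂ),
      a.PosSemidef → b.PosSemidef →
      0 ≤ (((x : Matrix (Fin dA × Fin dB) (Fin dA × Fin dB) ℂ) * (a ⊗ₖ b)).trace).re}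

section aux
variable {dA dB : ℕ}

lemma std_diag (i : Fin dA × Fin dB) :
    Matrix.single i i (1:ℂ) = Matrix.diagonal (Pi.single i 1) := by
  ext a b
  simp only [Matrix.single, Matrix.diagonal, Matrix.of_apply, Pi.single_apply]
  by_cases h1 : i = a <;> by_cases h2 : a = b <;> simp_all [eq_comm]

lemma std_psd (n : Type*) [Fintype n] [DecidableEq n] (i : n) :
    (Matrix.single i i (1:ℂ)).PosSemidef := by
  have : Matrix.single i i (1:ℂ) = Matrix.diagonal (Pi.single i 1) := by
    ext a b
    simp only [Matrix.single, Matrix.diagonal, Matrix.of_apply, Pi.single_apply]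
    by_cases h1 : i = a <;> by_cases h2 : a = b <;> simp_all [eq_comm]
  rw [this]
  refine Matrix.posSemidef_diagonal_iff.mpr fun j => ?_
  by_cases h : j = i <;> simp [Pi.single_apply, h]

lemma std_kron (i : Fin dA × Fin dB) :
    Matrix.single i i (1:ℂ) =
      Matrix.single i.1 i.1 (1:ℂ) ⊗ₖ Matrix.single i.2 i.2 (1:ℂ) := by
  ext ⟨a, b⟩ ⟨c, d⟩
  simp only [Matrix.single, Matrix.kroneckerMap_apply, Matrix.of_apply, Prod.mk.injEq,
    Prod.ext_iff]
  by_cases h1 : i.1 = a <;> by_cases h2 : i.2 = b <;> by_cases h3 : i.1 = c <;>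
    by_cases h4 : i.2 = d <;> simp_all
theorem stmt_10 {dA dB : ℕ} (hdA : 2 ≤ dA) (hdB : 2 ≤ dB)
    (C : Set (HermM dA dB))
    (hclosed : IsClosed C) (hconvex : Convex ℝ C)
    (hint : (interior C).Nonempty)
    (hsmul : ∀ (r : ℝ), 0 ≤ r → ∀ x ∈ C, r • x ∈ C)
    (hproper : C ∩ (-C) = {0})
    (hSEP : {x : HermM dA dB |
      (x : Matrix (Fin dA × Fin dB) (Fin dA × Fin dB) ℂ) ∈ SEPcone dA dB} ⊆ C)
    (hSEPd : C ⊆ SEPdualH dA dB)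
    (hGU : ∀ U : Matrix (Fin dA × Fin dB) (Fin dA × Fin dB) ℂ,
      star U * U = 1 → U * star U = 1 →
      ((fun x : HermM dA dB =>
          star U * (x : Matrix (Fin dA × Fin dB) (Fin dA × Fin dB) ℂ) * U) '' C) =
        ((fun x : HermM dA dB =>
          (x : Matrix (Fin dA × Fin dB) (Fin dA × Fin dB) ℂ)) '' C)) :
    C = {x : HermM dA dB |
      (x : Matrix (Fin dA × Fin dB) (Fin dA × Fin dB) ℂ).PosSemidef} := by
  -- 0 ∈ C
  have hzero : (0 : HermM dA dB) ∈ C := by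
    apply hSEP
    exact ⟨0, fun i => 0, fun i => 0, fun i => i.elim0, fun i => i.elim0, by simp⟩
  -- C is closed under addition
  have hadd : ∀ x ∈ C, ∀ y ∈ C, x + y ∈ C := by
    intro x hx y hy
    have h1 : (1/2 : ℝ) • x + (1/2 : ℝ) • y ∈ C :=
      hconvex hx hy (by norm_num) (by norm_num) (by norm_num)
    have h2 := hsmul 2 (by norm_num) _ h1
    have : (2:ℝ) • ((1/2 : ℝ) • x + (1/2 : ℝ) • y) = x + y := by
      rw [smul_add, smul_smul, smul_smul]; norm_num
    rwa [this] at h2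
  -- conjugation by unitaries stays in C
  have hconj : ∀ U ∈ Matrix.unitaryGroup (Fin dA × Fin dB) ℂ, ∀ x ∈ C,
      ∃ y ∈ C, (y : Matrix (Fin dA × Fin dB) (Fin dA × Fin dB) ℂ) =
        star U * (x : Matrix (Fin dA × Fin dB) (Fin dA × Fin dB) ℂ) * U := by
    intro U hU x hx
    have him := hGU U hU.1 hU.2
    have hmem : star U * (x : Matrix (Fin dA × Fin dB) (Fin dA × Fin dB) ℂ) * U ∈
        ((fun x : HermM dA dB =>
          (x : Matrix (Fin dA × Fin dB) (Fin dA × Fin dB) ℂ)) '' C) := by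
      rw [← him]; exact ⟨x, hx, rfl⟩
    obtain ⟨y, hy, hyeq⟩ := hmem
    exact ⟨y, hy, hyeq⟩
  -- the standard diagonal PSD projectors, as Hermitian elements
  let e : Fin dA × Fin dB → HermM dA dB := fun i =>
    ⟨Matrix.single i i (1:ℂ), (std_psd _ i).isHermitian⟩
  have hstd : ∀ i, e i ∈ C := by
    intro i
    apply hSEP
    refine ⟨1, fun _ => Matrix.single i.1 i.1 1, fun _ => Matrix.single i.2 i.2 1,
      fun _ => std_psd _ _, fun _ => std_psd _ _, ?_⟩
    simp [e, std_kron i]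
  -- diagonal matrices with nonnegative entries are in C
  have hdiagC : ∀ d : Fin dA × Fin dB → ℝ, (∀ i, 0 ≤ d i) →
      ∀ z : HermM dA dB, (z : Matrix (Fin dA × Fin dB) (Fin dA × Fin dB) ℂ) =
        Matrix.diagonal (RCLike.ofReal ∘ d) → z ∈ C := by
    intro d hd z hz
    have hsum : (∑ i, d i • e i) ∈ C := by
      refine Finset.sum_induction _ (· ∈ C) (fun a b ha hb => hadd a ha b hb) hzero ?_
      intro i _
      exact hsmul (d i) (hd i) _ (hstd i)
    have hval : ((∑ i, d i • e i : HermM dA dB) :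
        Matrix (Fin dA × Fin dB) (Fin dA × Fin dB) ℂ) =
        ∑ i, d i • (e i : Matrix (Fin dA × Fin dB) (Fin dA × Fin dB) ℂ) := by
      have := map_sum (selfAdjoint (Matrix (Fin dA × Fin dB) (Fin dA × Fin dB) ℂ)).subtype
        (fun i => d i • e i) Finset.univ
      simpa [selfAdjoint.val_smul] using this
    have hcoe : ((∑ i, d i • e i : HermM dA dB) :
        Matrix (Fin dA × Fin dB) (Fin dA × Fin dB) ℂ) =
        Matrix.diagonal (RCLike.ofReal ∘ d) := by
      rw [hval]
      ext a b
      simp only [Matrix.sum_apply, Matrix.smul_apply, Matrix.single, Matrix.of_apply,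
        Matrix.diagonal, Function.comp_apply, smul_ite, smul_zero, smul_eq_mul, e]
      rw [Finset.sum_eq_single a]
      · by_cases h : a = b <;> simp [h, Complex.real_smul]
      · intro c _ hc; simp [hc]
      · simp
    have hze : z = ∑ i, d i • e i := Subtype.ext (hz.trans hcoe.symm)
    rwa [hze]
  apply Set.eq_of_subset_of_subset
  · -- C ⊆ PSD
    intro x hx
    have hH : (x : Matrix (Fin dA × Fin dB) (Fin dA × Fin dB) ℂ).IsHermitian := x.prop
    apply hH.posSemidef_iff_eigenvalues_nonneg.mpr
    intro i
    obtain ⟨y, hy, hyeq⟩ := hconj _ (hH.eigenvectorUnitary).2 x hx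
    rw [← Unitary.conjStarAlgAut_star_apply (S := ℂ), hH.conjStarAlgAut_star_eigenvectorUnitary] at hyeq
    have hd := hSEPd hy (Matrix.single i.1 i.1 1) (Matrix.single i.2 i.2 1)
      (std_psd _ _) (std_psd _ _)
    rw [← std_kron i, hyeq] at hd
    have htr : ((Matrix.diagonal (RCLike.ofReal ∘ hH.eigenvalues) *
        Matrix.single i i (1:ℂ)).trace) = (hH.eigenvalues i : ℂ) := by
      rw [std_diag i, Matrix.diagonal_mul_diagonal, Matrix.trace_diagonal]
      rw [Finset.sum_eq_single i]
      · simp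
      · intro c _ hc; simp [Pi.single_apply, hc]
      · simp
    rw [htr] at hd
    simpa using hd
  · -- PSD ⊆ C
    intro x hx
    have hpsd : (x : Matrix (Fin dA × Fin dB) (Fin dA × Fin dB) ℂ).PosSemidef := hx
    have hH := hpsd.1
    set U := (hH.eigenvectorUnitary : Matrix (Fin dA × Fin dB) (Fin dA × Fin dB) ℂ) with hU
    have hUstar : star U ∈ Matrix.unitaryGroup (Fin dA × Fin dB) ℂ :=
      Unitary.star_mem hH.eigenvectorUnitary.2
    have hdH : (Matrix.diagonal (RCLike.ofReal ∘ hH.eigenvalues) :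
        Matrix (Fin dA × Fin dB) (Fin dA × Fin dB) ℂ).IsHermitian := by
      apply Matrix.isHermitian_diagonal_iff.mpr
      intro i
      simp [IsSelfAdjoint, Function.comp, RCLike.star_def]
    set z : HermM dA dB := ⟨_, hdH⟩ with hzdef
    have hzC : z ∈ C := hdiagC _ hpsd.eigenvalues_nonneg z rfl
    obtain ⟨y, hyC, hyeq⟩ := hconj (star U) hUstar z hzC
    have hyx : y = x := by
      apply Subtype.ext
      rw [hyeq, star_star]
      exact (hH.spectral_theorem).symm
    rwa [hyx] at hyC
end aux
end

section
/- Let 0 ≤ r ≤ (n − 1)/2. Then every element of NPM_r belongs to the dual cone of the separable cone: for every MEOP family {E_k}_{k=1}^{D}, every 0 ≤ λ ≤ r, and every pair of positive semidefinite n×n matrices a and b, one has Tr((−λ·E_1 + (1+λ)·E_2 + (1/2)·Σ_{k=3}^{D} E_k) · (a ⊗ b)) ≥ 0. -/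
open Kronecker ComplexOrder

/-- A vector `v ∈ ℂ^n ⊗ ℂ^n` is a maximally entangled unit vector if it is a unit vector
and the matrix `W (i, j) = v (i, j)` satisfies `W · Wᴴ = (1/n) · I`. -/
def IsMaxEnt {n : ℕ} (v : Fin n × Fin n → ℂ) : Prop :=
  (∑ x, Complex.normSq (v x)) = 1 ∧
  (Matrix.of fun i j : Fin n => v (i, j)) * star (Matrix.of fun i j : Fin n => v (i, j)) =
    ((n : ℂ))⁻¹ • 1

/-- A MEOP family: `n²` pairwise orthogonal rank-one projections onto maximally entangled
unit vectors, summing to the identity. -/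
def IsMEOP {n : ℕ} (E : Fin (n * n) → Matrix (Fin n × Fin n) (Fin n × Fin n) ℂ) : Prop :=
  ∃ v : Fin (n * n) → (Fin n × Fin n → ℂ),
    (∀ k l, ∑ x, (starRingEnd ℂ) (v k x) * v l x = if k = l then 1 else 0) ∧
    (∀ k, IsMaxEnt (v k)) ∧
    (∀ k, E k = Matrix.vecMulVec (v k) (star (v k))) ∧
    ∑ k, E k = 1

/-- The element `−λ·E_{k₁} + (1+λ)·E_{k₂} + (1/2)·Σ_{k ∉ {k₁,k₂}} E_k` of `NPM_r`. -/
noncomputable def npmElt {n : ℕ} (lam : ℝ) (k1 k2 : Fin (n * n))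
    (E : Fin (n * n) → Matrix (Fin n × Fin n) (Fin n × Fin n) ℂ) :
    Matrix (Fin n × Fin n) (Fin n × Fin n) ℂ :=
  (-(lam : ℂ)) • E k1 + ((1 : ℂ) + (lam : ℂ)) • E k2 +
    (2⁻¹ : ℂ) • ∑ k ∈ Finset.univ \ {k1, k2}, E k

open Matrix in
theorem aux_vecMulVec_trace {m : Type*} [Fintype m] (u : m → ℂ) (X : Matrix m m ℂ) :
    (Matrix.vecMulVec u (star u) * X).trace = dotProduct (star u) (X *ᵥ u) := by
  simp [Matrix.trace, Matrix.mul_apply, Matrix.vecMulVec_apply, dotProduct,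
    Matrix.mulVec, Finset.mul_sum, Finset.sum_mul]
  rw [Finset.sum_comm]
  congr 1; ext i; congr 1; ext j; ring

open Matrix MatrixOrder Matrix.Norms.L2Operator in
theorem aux_posSemidef_iff_eq_conjTranspose_mul_self {m : Type*} [Fintype m] [DecidableEq m]
    {A : Matrix m m ℂ} : A.PosSemidef ↔ ∃ B : Matrix m m ℂ, A = Bᴴ * B := by
  constructor
  · intro hA
    obtain ⟨B, hB⟩ := CStarAlgebra.nonneg_iff_eq_star_mul_self.mp hA.nonneg
    exact ⟨B, hB⟩
  · rintro ⟨B, rfl⟩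
    exact Matrix.posSemidef_conjTranspose_mul_self B

open Matrix in
theorem aux_kron_psd {m l : Type*} [Fintype m] [Fintype l] [DecidableEq m] [DecidableEq l]
    {a : Matrix m m ℂ} {b : Matrix l l ℂ}
    (ha : a.PosSemidef) (hb : b.PosSemidef) : (a ⊗ₖ b).PosSemidef := by
  obtain ⟨A, rfl⟩ := aux_posSemidef_iff_eq_conjTranspose_mul_self.mp ha
  obtain ⟨B, rfl⟩ := aux_posSemidef_iff_eq_conjTranspose_mul_self.mp hb
  rw [Matrix.mul_kronecker_mul]
  have : Aᴴ ⊗ₖ Bᴴ = (A ⊗ₖ B)ᴴ := by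
    ext ⟨i,j⟩ ⟨k,l⟩; simp [Matrix.conjTranspose_apply, Matrix.kroneckerMap_apply]
  rw [this]
  exact Matrix.posSemidef_conjTranspose_mul_self _

open Matrix in
set_option maxHeartbeats 1000000 in
theorem aux_dot_eq_tr {n : ℕ} (v : Fin n × Fin n → ℂ) (a b : Matrix (Fin n) (Fin n) ℂ) :
    dotProduct (star v) ((a ⊗ₖ b) *ᵥ v) =
      (a * ((Matrix.of fun i j : Fin n => v (i, j)) * bᵀ *
        (Matrix.of fun i j : Fin n => v (i, j))ᴴ)).trace := by
  simp only [Matrix.trace, Matrix.diag_apply, Matrix.mul_apply, dotProduct,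
    Matrix.mulVec, Matrix.kroneckerMap_apply, Matrix.conjTranspose_apply, Matrix.of_apply,
    Matrix.transpose_apply, Pi.star_apply, Finset.mul_sum, Finset.sum_mul]
  rw [Fintype.sum_prod_type]
  simp only [Fintype.sum_prod_type]
  refine Finset.sum_congr rfl fun x _ => ?_
  rw [Finset.sum_comm]
  refine Finset.sum_congr rfl fun k _ => Finset.sum_congr rfl fun j _ =>
    Finset.sum_congr rfl fun l _ => ?_
  simp only [RCLike.star_def]
  ring

open Matrix in
theorem aux_re_trace_ctm {m : Type*} [Fintype m] (M : Matrix m m ℂ) :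
    ((Mᴴ * M).trace).re = ∑ i, ∑ j, Complex.normSq (M i j) := by
  simp only [Matrix.trace, Matrix.diag_apply, Matrix.mul_apply, Matrix.conjTranspose_apply,
    RCLike.star_def]
  rw [Finset.sum_comm]
  simp [← Complex.normSq_eq_conj_mul_self, Complex.re_sum]

open Matrix in
theorem aux_entry_cs {m : Type*} [Fintype m] (C A : Matrix m m ℂ) (i j : m) :
    Complex.normSq ((C * Aᴴ) i j) ≤
      (∑ k, Complex.normSq (C i k)) * (∑ k, Complex.normSq (A j k)) := by
  have h1 : ‖(C * Aᴴ) i j‖ ≤ ∑ k, ‖C i k‖ * ‖A j k‖ := by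
    rw [Matrix.mul_apply]
    refine (norm_sum_le _ _).trans ?_
    refine Finset.sum_le_sum fun k _ => ?_
    simp [Matrix.conjTranspose_apply, norm_mul]
  have h2 : (∑ k, ‖C i k‖ * ‖A j k‖) ^ 2 ≤
      (∑ k, ‖C i k‖ ^ 2) * (∑ k, ‖A j k‖ ^ 2) :=
    Finset.sum_mul_sq_le_sq_mul_sq _ _ _
  calc Complex.normSq ((C * Aᴴ) i j) = ‖(C * Aᴴ) i j‖ ^ 2 := (Complex.sq_norm _).symm
    _ ≤ (∑ k, ‖C i k‖ * ‖A j k‖) ^ 2 := by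
        apply pow_le_pow_left₀ (norm_nonneg _) h1
    _ ≤ (∑ k, ‖C i k‖ ^ 2) * (∑ k, ‖A j k‖ ^ 2) := h2
    _ = _ := by simp [Complex.sq_norm]

open Matrix in
theorem aux_trace_mul_le_psd {m : Type*} [Fintype m] [DecidableEq m] {a P : Matrix m m ℂ}
    (ha : a.PosSemidef) (hP : P.PosSemidef) :
    ((a * P).trace).re ≤ a.trace.re * P.trace.re := by
  obtain ⟨A, rfl⟩ := aux_posSemidef_iff_eq_conjTranspose_mul_self.mp ha
  obtain ⟨C, rfl⟩ := aux_posSemidef_iff_eq_conjTranspose_mul_self.mp hP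
  have key : (Aᴴ * A * (Cᴴ * C)).trace = ((C * Aᴴ)ᴴ * (C * Aᴴ)).trace := by
    rw [Matrix.conjTranspose_mul, Matrix.conjTranspose_conjTranspose]
    have e1 : Aᴴ * A * (Cᴴ * C) = Aᴴ * (A * Cᴴ * C) := by rw [mul_assoc, mul_assoc]
    rw [e1, Matrix.trace_mul_comm, mul_assoc (A * Cᴴ)]
  rw [key, aux_re_trace_ctm, aux_re_trace_ctm, aux_re_trace_ctm]
  calc ∑ i, ∑ j, Complex.normSq ((C * Aᴴ) i j)
      ≤ ∑ i, ∑ j, (∑ k, Complex.normSq (C i k)) * (∑ k, Complex.normSq (A j k)) :=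
        Finset.sum_le_sum fun i _ => Finset.sum_le_sum fun j _ => aux_entry_cs C A i j
    _ = (∑ i, ∑ k, Complex.normSq (A i k)) * (∑ i, ∑ k, Complex.normSq (C i k)) := by
        rw [← Finset.sum_mul_sum]; ring

open Matrix in
theorem aux_psd_trace_nonneg {m : Type*} [Fintype m] [DecidableEq m] {a : Matrix m m ℂ}
    (ha : a.PosSemidef) : 0 ≤ a.trace := by
  rw [Matrix.trace]
  refine Finset.sum_nonneg fun i _ => ?_
  have := ha.dotProduct_mulVec_nonneg (Pi.single i 1)
  simpa [dotProduct, Matrix.mulVec, Pi.single_apply, Finset.mul_sum] using this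

theorem aux_eq_re {z : ℂ} (hz : 0 ≤ z) : z = ((z.re : ℝ) : ℂ) := by
  have him := (Complex.le_def.mp hz).2
  exact Complex.ext (by simp) (by simp [← him])

set_option maxHeartbeats 1000000 in
theorem stmt_14 {n : ℕ} (hn : 2 ≤ n) (r : ℝ) (hr0 : 0 ≤ r)
    (hr : r ≤ ((n : ℝ) - 1) / 2)
    (E : Fin (n * n) → Matrix (Fin n × Fin n) (Fin n × Fin n) ℂ) (hE : IsMEOP E)
    (k1 k2 : Fin (n * n)) (hk : k1 ≠ k2)
    (lam : ℝ) (hlam0 : 0 ≤ lam) (hlamr : lam ≤ r)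
    (a b : Matrix (Fin n) (Fin n) ℂ) (ha : a.PosSemidef) (hb : b.PosSemidef) :
    0 ≤ ((npmElt lam k1 k2 E) * (a ⊗ₖ b)).trace := by
  obtain ⟨v, hortho, hmax, hEv, hsum⟩ := hE
  set X := a ⊗ₖ b with hX
  have hXpsd : X.PosSemidef := aux_kron_psd ha hb
  set t : Fin (n*n) → ℂ := fun k => dotProduct (star (v k)) (X.mulVec (v k)) with htdef
  have htr : ∀ k, (E k * X).trace = t k := fun k => by rw [hEv k, aux_vecMulVec_trace]
  have ht0 : ∀ k, 0 ≤ t k := fun k => hXpsd.dotProduct_mulVec_nonneg (v k)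
  set τ : Fin (n*n) → ℝ := fun k => (t k).re with hτdef
  have htre : ∀ k, t k = ((τ k : ℝ) : ℂ) := fun k => aux_eq_re (ht0 k)
  have hτ0 : ∀ k, 0 ≤ τ k := fun k => by
    have := (Complex.le_def.mp (ht0 k)).1; simpa using this
  -- traces of a, b are real and nonneg
  have hn0 : (n : ℂ) ≠ 0 := by positivity
  set α := a.trace.re with hαdef
  set β := b.trace.re with hβdef
  have hα : a.trace = ((α : ℝ) : ℂ) := aux_eq_re (aux_psd_trace_nonneg ha)
  have hβ : b.trace = ((β : ℝ) : ℂ) := aux_eq_re (aux_psd_trace_nonneg hb)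
  have hα0 : 0 ≤ α := by
    have := (Complex.le_def.mp (aux_psd_trace_nonneg ha)).1; simpa using this
  have hβ0 : 0 ≤ β := by
    have := (Complex.le_def.mp (aux_psd_trace_nonneg hb)).1; simpa using this
  -- total sum
  have hT : ∑ k, t k = a.trace * b.trace := by
    have h1 : ∑ k, (E k * X).trace = ((∑ k, E k) * X).trace := by
      rw [Matrix.sum_mul, Matrix.trace_sum]
    rw [hsum, Matrix.one_mul, hX, Matrix.trace_kronecker] at h1
    rw [← h1]
    exact Finset.sum_congr rfl fun k _ => (htr k).symm
  have hS : ∑ k, τ k = α * β := by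
    have h := congrArg Complex.re hT
    rw [Complex.re_sum, hα, hβ, ← Complex.ofReal_mul] at h
    simpa [hτdef] using h
  -- bound τ k1 using maximal entanglement
  set W : Matrix (Fin n) (Fin n) ℂ := Matrix.of fun i j : Fin n => v k1 (i, j) with hWdef
  have hW : W * W.conjTranspose = ((n : ℂ))⁻¹ • 1 := by
    have := (hmax k1).2
    rwa [← Matrix.star_eq_conjTranspose]
  have hWW : W.conjTranspose * W = ((n : ℂ))⁻¹ • 1 := by
    have h1 : ((n:ℂ) • W) * W.conjTranspose = 1 := by
      rw [Matrix.smul_mul, hW, smul_smul, mul_inv_cancel₀ hn0, one_smul]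
    have h2 : W.conjTranspose * ((n:ℂ) • W) = 1 := mul_eq_one_comm.mp h1
    calc W.conjTranspose * W = (n:ℂ)⁻¹ • ((n:ℂ) • (W.conjTranspose * W)) := by
          rw [smul_smul, inv_mul_cancel₀ hn0, one_smul]
      _ = (n:ℂ)⁻¹ • (W.conjTranspose * ((n:ℂ) • W)) := by rw [Matrix.mul_smul]
      _ = (n:ℂ)⁻¹ • 1 := by rw [h2]
  set P : Matrix (Fin n) (Fin n) ℂ := W * b.transpose * W.conjTranspose with hPdef
  have hPpsd : P.PosSemidef := hb.transpose.mul_mul_conjTranspose_same W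
  have hPt : P.trace = ((β / n : ℝ) : ℂ) := by
    rw [hPdef, mul_assoc, Matrix.trace_mul_comm, mul_assoc, hWW, Matrix.mul_smul,
      Matrix.mul_one, Matrix.trace_smul, Matrix.trace_transpose, hβ]
    push_cast
    rw [smul_eq_mul]
    ring
  have ht1 : t k1 = (a * P).trace := aux_dot_eq_tr (v k1) a b
  have hbound : τ k1 ≤ α * (β / n) := by
    have h := aux_trace_mul_le_psd ha hPpsd
    rw [hPt] at h
    have : (a * P).trace.re = τ k1 := by rw [← ht1]
    rw [this] at h
    simpa using h
  -- rest sum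
  have hrest : ∑ k ∈ Finset.univ \ {k1,k2}, τ k = α*β - τ k1 - τ k2 := by
    rw [Finset.sum_sdiff_eq_sub (Finset.subset_univ _), hS, Finset.sum_pair hk]; ring
  have hrest0 : 0 ≤ ∑ k ∈ Finset.univ \ {k1,k2}, τ k :=
    Finset.sum_nonneg fun k _ => hτ0 k
  -- main computation
  have hmain : ((npmElt lam k1 k2 E) * X).trace =
      (((-lam * τ k1 + (1+lam) * τ k2
        + 2⁻¹ * (∑ k ∈ Finset.univ \ {k1,k2}, τ k)) : ℝ) : ℂ) := by
    rw [npmElt, Matrix.add_mul, Matrix.add_mul, Matrix.smul_mul, Matrix.smul_mul,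
      Matrix.smul_mul, Matrix.trace_add, Matrix.trace_add, Matrix.trace_smul,
      Matrix.trace_smul, Matrix.trace_smul, Matrix.sum_mul, Matrix.trace_sum]
    rw [htr k1, htr k2]
    have hsd : ∑ k ∈ Finset.univ \ {k1,k2}, (E k * X).trace
        = (((∑ k ∈ Finset.univ \ {k1,k2}, τ k : ℝ)) : ℂ) := by
      rw [Complex.ofReal_sum]
      exact Finset.sum_congr rfl fun k _ => by rw [htr k, htre k]
    rw [hsd, htre k1, htre k2]
    simp only [smul_eq_mul]
    push_cast
    ring
  rw [hmain, Complex.zero_le_real]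
  rw [hrest]
  have hlamn : lam ≤ ((n:ℝ) - 1) / 2 := hlamr.trans hr
  have hn2 : (2:ℝ) ≤ (n:ℝ) := by exact_mod_cast hn
  have hτ1n : (n:ℝ) * τ k1 ≤ α * β := by
    have hnpos : (0:ℝ) < n := by linarith
    rw [← le_div_iff₀' hnpos]
    calc τ k1 ≤ α * (β / n) := hbound
      _ = α * β / n := by ring
  have h12 : 0 ≤ α*β - τ k1 - τ k2 := by rw [← hrest]; exact hrest0
  nlinarith [mul_nonneg (show (0:ℝ) ≤ (n:ℝ) - (2*lam+1) by linarith) (hτ0 k1),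
    mul_nonneg (show (0:ℝ) ≤ 1 + 2*lam by linarith) (hτ0 k2), hτ0 k1, hτ0 k2]
end

section
/- Let 0 ≤ r ≤ (√2·n − 2)/4. Then any two elements x, y ∈ NPM_r satisfy Tr(x·y) ≥ 0; that is, for any two MEOP families {E_k} and {E'_k} and any 0 ≤ λ, μ ≤ r, letting x = −λ·E_1 + (1+λ)·E_2 + (1/2)·Σ_{k=3}^{D} E_k and y = −μ·E'_1 + (1+μ)·E'_2 + (1/2)·Σ_{k=3}^{D} E'_k, one has Tr(x·y) ≥ 0. -/
open Kronecker ComplexOrder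

lemma aux_trace_vmv {ι : Type*} [Fintype ι] [DecidableEq ι] (a b : ι → ℂ) :
    (Matrix.vecMulVec a (star a) * Matrix.vecMulVec b (star b)).trace
      = Complex.normSq (∑ x, (starRingEnd ℂ) (a x) * b x) := by
  rw [Complex.normSq_eq_conj_mul_self]
  simp only [Matrix.trace, Matrix.diag, Matrix.mul_apply, Matrix.vecMulVec_apply,
    Pi.star_apply, map_sum, _root_.map_mul, Complex.conj_conj, Finset.sum_mul_sum]
  exact Finset.sum_congr rfl fun i _ => Finset.sum_congr rfl fun j _ => by
    simp [Complex.star_def]; ring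

lemma aux_cs {ι : Type*} [Fintype ι] (a b : ι → ℂ) (ha : ∑ x, Complex.normSq (a x) = 1)
    (hb : ∑ x, Complex.normSq (b x) = 1) :
    Complex.normSq (∑ x, (starRingEnd ℂ) (a x) * b x) ≤ 1 := by
  have h := @norm_inner_le_norm ℂ (EuclideanSpace ℂ ι) _ _ _
    ((WithLp.equiv 2 _).symm a) ((WithLp.equiv 2 _).symm b)
  rw [PiLp.inner_apply] at h
  simp only [RCLike.inner_apply, WithLp.equiv_symm_apply, WithLp.ofLp_toLp] at h
  have hna : ‖(WithLp.equiv 2 _).symm a‖ = 1 := by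
    rw [EuclideanSpace.norm_eq]
    simp only [WithLp.equiv_symm_apply, WithLp.ofLp_toLp, Complex.sq_norm]
    rw [ha, Real.sqrt_one]
  have hnb : ‖(WithLp.equiv 2 _).symm b‖ = 1 := by
    rw [EuclideanSpace.norm_eq]
    simp only [WithLp.equiv_symm_apply, WithLp.ofLp_toLp, Complex.sq_norm]
    rw [hb, Real.sqrt_one]
  simp only [WithLp.equiv_symm_apply] at hna hnb
  rw [hna, hnb, mul_one] at h
  rw [Complex.normSq_eq_norm_sq]
  calc ‖∑ x, (starRingEnd ℂ) (a x) * b x‖ ^ 2 ≤ 1 ^ 2 :=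
        pow_le_pow_left₀ (by positivity) (by simpa [mul_comm] using h) 2
    _ = 1 := one_pow 2

lemma aux_npm_decomp {n : ℕ} (lam : ℝ) (k1 k2 : Fin (n * n)) (hk : k1 ≠ k2)
    (E : Fin (n * n) → Matrix (Fin n × Fin n) (Fin n × Fin n) ℂ)
    (hEsum : ∑ k, E k = 1) :
    npmElt lam k1 k2 E = (2⁻¹ : ℂ) • (1 : Matrix (Fin n × Fin n) (Fin n × Fin n) ℂ)
      + ((lam : ℂ) + 2⁻¹) • (E k2 - E k1) := by
  have hsplit : ∑ k ∈ Finset.univ \ {k1, k2}, E k = 1 - (E k1 + E k2) := by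
    rw [Finset.sum_sdiff_eq_sub (Finset.subset_univ _), hEsum, Finset.sum_pair hk]
  unfold npmElt
  rw [hsplit]
  module

theorem stmt_15 {n : ℕ} (hn : 2 ≤ n) (r : ℝ) (hr0 : 0 ≤ r)
    (hr : r ≤ (Real.sqrt 2 * (n : ℝ) - 2) / 4)
    (E E' : Fin (n * n) → Matrix (Fin n × Fin n) (Fin n × Fin n) ℂ)
    (hE : IsMEOP E) (hE' : IsMEOP E')
    (k1 k2 : Fin (n * n)) (hk : k1 ≠ k2)
    (l1 l2 : Fin (n * n)) (hl : l1 ≠ l2)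
    (lam mu : ℝ) (hlam0 : 0 ≤ lam) (hlamr : lam ≤ r) (hmu0 : 0 ≤ mu) (hmur : mu ≤ r) :
    0 ≤ ((npmElt lam k1 k2 E) * (npmElt mu l1 l2 E')).trace := by

  obtain ⟨v, hvo, hvm, hEdef, hEsum⟩ := hE
  obtain ⟨w, hwo, hwm, hFdef, hFsum⟩ := hE'
  have htrE : ∀ k, (E k).trace = 1 := by
    intro k
    rw [hEdef k]
    have h1 : (Matrix.vecMulVec (v k) (star (v k))).trace
        = ∑ x, (starRingEnd ℂ) (v k x) * v k x := by
      simp only [Matrix.trace, Matrix.diag, Matrix.vecMulVec_apply, Pi.star_apply,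
        Complex.star_def]
      exact Finset.sum_congr rfl fun x _ => mul_comm _ _
    rw [h1, hvo k k, if_pos rfl]
  have htrF : ∀ k, (E' k).trace = 1 := by
    intro k
    rw [hFdef k]
    have h1 : (Matrix.vecMulVec (w k) (star (w k))).trace
        = ∑ x, (starRingEnd ℂ) (w k x) * w k x := by
      simp only [Matrix.trace, Matrix.diag, Matrix.vecMulVec_apply, Pi.star_apply,
        Complex.star_def]
      exact Finset.sum_congr rfl fun x _ => mul_comm _ _
    rw [h1, hwo k k, if_pos rfl]
  set c : Fin (n*n) → Fin (n*n) → ℝ :=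
    fun k l => Complex.normSq (∑ x, (starRingEnd ℂ) (v k x) * w l x) with hc
  have htrEF : ∀ k l, (E k * E' l).trace = (c k l : ℂ) := by
    intro k l
    rw [hEdef k, hFdef l, aux_trace_vmv]
  have hc0 : ∀ k l, 0 ≤ c k l := fun k l => Complex.normSq_nonneg _
  have hc1 : ∀ k l, c k l ≤ 1 := fun k l =>
    aux_cs (v k) (w l) (hvm k).1 (hwm l).1
  rw [aux_npm_decomp lam k1 k2 hk E hEsum, aux_npm_decomp mu l1 l2 hl E' hFsum]
  set B := E k2 - E k1 with hB
  set C := E' l2 - E' l1 with hC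
  have htrB : B.trace = 0 := by
    rw [hB, Matrix.trace_sub, htrE, htrE, sub_self]
  have htrC : C.trace = 0 := by
    rw [hC, Matrix.trace_sub, htrF, htrF, sub_self]
  have htrBC : (B * C).trace = ((c k2 l2 - c k2 l1 - c k1 l2 + c k1 l1 : ℝ) : ℂ) := by
    rw [hB, hC, Matrix.sub_mul, Matrix.mul_sub, Matrix.mul_sub, Matrix.trace_sub,
      Matrix.trace_sub, Matrix.trace_sub, htrEF, htrEF, htrEF, htrEF]
    push_cast
    ring
  have hexp : (((2⁻¹ : ℂ) • (1 : Matrix (Fin n × Fin n) (Fin n × Fin n) ℂ)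
        + ((lam : ℂ) + 2⁻¹) • B)
      * ((2⁻¹ : ℂ) • (1 : Matrix (Fin n × Fin n) (Fin n × Fin n) ℂ)
        + ((mu : ℂ) + 2⁻¹) • C)).trace
      = (2⁻¹ : ℂ) * 2⁻¹ * (Matrix.trace (1 : Matrix (Fin n × Fin n) (Fin n × Fin n) ℂ))
        + (2⁻¹ : ℂ) * ((mu : ℂ) + 2⁻¹) * C.trace
        + ((lam : ℂ) + 2⁻¹) * 2⁻¹ * B.trace
        + ((lam : ℂ) + 2⁻¹) * ((mu : ℂ) + 2⁻¹) * (B * C).trace := by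
    simp only [Matrix.add_mul, Matrix.mul_add, Matrix.smul_mul, Matrix.mul_smul,
      Matrix.one_mul, Matrix.mul_one, Matrix.trace_add, Matrix.trace_smul, smul_smul,
      smul_eq_mul]
    ring
  rw [hexp, htrB, htrC, htrBC]
  have htr1 : (Matrix.trace (1 : Matrix (Fin n × Fin n) (Fin n × Fin n) ℂ))
      = ((n * n : ℝ) : ℂ) := by
    rw [Matrix.trace_one]
    push_cast [Fintype.card_prod, Fintype.card_fin]
    ring
  rw [htr1]
  have heq : ((2⁻¹ : ℂ) * 2⁻¹ * ((n * n : ℝ) : ℂ)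
        + (2⁻¹ : ℂ) * ((mu : ℂ) + 2⁻¹) * 0
        + ((lam : ℂ) + 2⁻¹) * 2⁻¹ * 0
        + ((lam : ℂ) + 2⁻¹) * ((mu : ℂ) + 2⁻¹)
          * ((c k2 l2 - c k2 l1 - c k1 l2 + c k1 l1 : ℝ) : ℂ))
      = (((2⁻¹ : ℝ) * 2⁻¹ * (n * n)
        + (lam + 2⁻¹) * (mu + 2⁻¹) * (c k2 l2 - c k2 l1 - c k1 l2 + c k1 l1) : ℝ) : ℂ) := by
    push_cast
    ring
  rw [heq]
  rw [Complex.zero_le_real]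
  have hs2 : Real.sqrt 2 ^ 2 = 2 := Real.sq_sqrt (by norm_num)
  have hs0 : (0:ℝ) ≤ Real.sqrt 2 := Real.sqrt_nonneg 2
  have hn2 : (2:ℝ) ≤ (n:ℝ) := by exact_mod_cast hn
  have hP0 : (0:ℝ) ≤ lam + 2⁻¹ := by linarith
  have hQ0 : (0:ℝ) ≤ mu + 2⁻¹ := by linarith
  have hPs : lam + 2⁻¹ ≤ Real.sqrt 2 * n / 4 := by
    have := hr
    linarith
  have hQs : mu + 2⁻¹ ≤ Real.sqrt 2 * n / 4 := by linarith
  have hT : (-2:ℝ) ≤ c k2 l2 - c k2 l1 - c k1 l2 + c k1 l1 := by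
    have := hc0 k2 l2; have := hc0 k1 l1
    have := hc1 k2 l1; have := hc1 k1 l2
    linarith
  nlinarith [mul_nonneg hP0 hQ0,
    mul_nonneg (mul_nonneg hP0 hQ0) (by linarith : (0:ℝ) ≤ (c k2 l2 - c k2 l1 - c k1 l2 + c k1 l1) + 2),
    mul_nonneg (by linarith : (0:ℝ) ≤ Real.sqrt 2 * n / 4 - (lam + 2⁻¹)) hQ0,
    mul_nonneg (by linarith : (0:ℝ) ≤ Real.sqrt 2 * n / 4 - (mu + 2⁻¹))
      (by positivity : (0:ℝ) ≤ Real.sqrt 2 * n / 4)]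
end

section
/- Let r ≥ 0 and let ρ be a state on ℂ^n ⊗ ℂ^n (a positive semidefinite D×D matrix of trace 1) such that Tr(ρ · v vᴴ) ≤ 1/(2r + 1) for every maximally entangled unit vector v. Then Tr(ρ · (τ + N)) ≥ 0 for every positive semidefinite D×D matrix τ and every N ∈ NPM_r; in particular, Tr(ρ · (−λ·E_1 + (1+λ)·E_2 + (1/2)·Σ_{k=3}^{D} E_k)) ≥ 0 for every MEOP family {E_k} and every 0 ≤ λ ≤ r. -/
open Kronecker ComplexOrder Matrix

lemma trace_mul_vecMulVec {m : Type*} [Fintype m] (A : Matrix m m ℂ) (v : m → ℂ) :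
    (A * Matrix.vecMulVec v (star v)).trace = star v ⬝ᵥ A.mulVec v := by
  simp only [Matrix.trace, Matrix.diag, Matrix.mul_apply, Matrix.vecMulVec_apply,
    dotProduct, Matrix.mulVec, Pi.star_apply, Finset.mul_sum]
  apply Finset.sum_congr rfl; intros; apply Finset.sum_congr rfl; intros; ring

lemma trace_ctm_nonneg {m p : Type*} [Fintype m] [Fintype p] (M : Matrix m p ℂ) :
    0 ≤ (Mᴴ * M).trace := by
  rw [Matrix.trace]
  apply Finset.sum_nonneg
  intro i _
  simp only [Matrix.diag, Matrix.mul_apply, Matrix.conjTranspose_apply]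
  exact Finset.sum_nonneg fun j _ => star_mul_self_nonneg _

lemma trace_mul_psd_nonneg {m : Type*} [Fintype m] [DecidableEq m]
    {A B : Matrix m m ℂ} (hA : A.PosSemidef) (hB : B.PosSemidef) :
    0 ≤ (A * B).trace := by
  obtain ⟨P, rfl⟩ : ∃ P : Matrix m m ℂ, A = Pᴴ * P := by
    open scoped MatrixOrder in
    obtain ⟨P, rfl⟩ := CStarAlgebra.nonneg_iff_eq_star_mul_self.mp hA.nonneg
    exact ⟨P, rfl⟩
  obtain ⟨Q, rfl⟩ : ∃ Q : Matrix m m ℂ, B = Qᴴ * Q := by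
    open scoped MatrixOrder in
    obtain ⟨Q, rfl⟩ := CStarAlgebra.nonneg_iff_eq_star_mul_self.mp hB.nonneg
    exact ⟨Q, rfl⟩
  have h : (Pᴴ * P * (Qᴴ * Q)).trace = ((Q * Pᴴ)ᴴ * (Q * Pᴴ)).trace := by
    rw [Matrix.conjTranspose_mul, Matrix.conjTranspose_conjTranspose,
      Matrix.trace_mul_cycle (Pᴴ) P (Qᴴ * Q), Matrix.trace_mul_comm]
    simp [Matrix.mul_assoc]
  rw [h]
  exact trace_ctm_nonneg _

theorem stmt_16 {n : ℕ} (hn : 2 ≤ n) (r : ℝ) (hr0 : 0 ≤ r)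
    (ρ : Matrix (Fin n × Fin n) (Fin n × Fin n) ℂ)
    (hρ : ρ.PosSemidef) (hρtr : ρ.trace = 1)
    (hfid : ∀ v : Fin n × Fin n → ℂ, IsMaxEnt v →
      ((ρ * Matrix.vecMulVec v (star v)).trace).re ≤ 1 / (2 * r + 1))
    (τ : Matrix (Fin n × Fin n) (Fin n × Fin n) ℂ) (hτ : τ.PosSemidef)
    (E : Fin (n * n) → Matrix (Fin n × Fin n) (Fin n × Fin n) ℂ) (hE : IsMEOP E)
    (k1 k2 : Fin (n * n)) (hk : k1 ≠ k2)
    (lam : ℝ) (hlam0 : 0 ≤ lam) (hlamr : lam ≤ r) :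
    0 ≤ (ρ * (τ + npmElt lam k1 k2 E)).trace := by
  obtain ⟨v, horth, hmax, hEv, hsum⟩ := hE
  set c : Fin (n * n) → ℂ := fun k => (ρ * E k).trace with hc
  have hc0 : ∀ k, 0 ≤ c k := by
    intro k
    rw [hc]
    simp only [hEv k]
    rw [trace_mul_vecMulVec]
    exact hρ.dotProduct_mulVec_nonneg (v k)
  have him : ∀ k, c k = ((c k).re : ℂ) := by
    intro k
    have := (Complex.le_def.mp (hc0 k)).2
    exact Complex.ext (by simp) (by simp [← this])
  have hre0 : ∀ k, 0 ≤ (c k).re := fun k => (Complex.le_def.mp (hc0 k)).1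
  have h1 : ∑ k, c k = 1 := by
    rw [hc]
    simp only
    rw [← Matrix.trace_sum, ← Matrix.mul_sum, hsum, Matrix.mul_one, hρtr]
  have h1re : ∑ k, (c k).re = 1 := by
    have := congrArg Complex.re h1
    simpa [Complex.re_sum] using this
  have hab : (c k1).re + (c k2).re ≤ 1 := by
    rw [← h1re, ← Finset.sum_pair (f := fun k => (c k).re) hk]
    exact Finset.sum_le_sum_of_subset_of_nonneg (Finset.subset_univ _)
      (fun k _ _ => hre0 k)
  have hfidk : (c k1).re ≤ 1 / (2 * r + 1) := by
    rw [hc]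
    simp only [hEv k1]
    exact hfid (v k1) (hmax k1)
  have hrest : ∑ k ∈ Finset.univ \ {k1, k2}, c k = 1 - c k1 - c k2 := by
    rw [Finset.sum_sdiff_eq_sub (Finset.subset_univ _), h1, Finset.sum_pair hk]
    ring
  have expand : (ρ * (τ + npmElt lam k1 k2 E)).trace =
      (ρ * τ).trace + ((-(lam : ℂ)) * c k1 + ((1 : ℂ) + lam) * c k2
        + (2⁻¹ : ℂ) * (1 - c k1 - c k2)) := by
    rw [← hrest]
    simp only [npmElt, Matrix.mul_add, Matrix.trace_add, Matrix.mul_smul, Matrix.trace_smul,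
      Matrix.mul_sum, Matrix.trace_sum, smul_eq_mul, hc]
  rw [expand]
  have hτtr := trace_mul_psd_nonneg hρ hτ
  apply add_nonneg hτtr
  set a := (c k1).re
  set b := (c k2).re
  rw [him k1, him k2]
  have : (-(lam : ℂ)) * (a : ℂ) + ((1 : ℂ) + lam) * (b : ℂ)
      + (2⁻¹ : ℂ) * (1 - (a : ℂ) - (b : ℂ))
      = (((-lam) * a + (1 + lam) * b + 2⁻¹ * (1 - a - b) : ℝ) : ℂ) := by
    push_cast
    ring
  rw [this, Complex.zero_le_real]
  have hpos : 0 < 2 * r + 1 := by linarith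
  have ha1 : a * (2 * r + 1) ≤ 1 := by
    have h := mul_le_mul_of_nonneg_right hfidk (le_of_lt hpos)
    rwa [one_div, inv_mul_cancel₀ (ne_of_gt hpos)] at h
  nlinarith [hre0 k1, hre0 k2, mul_nonneg (sub_nonneg.mpr hlamr) (hre0 k1)]
end

section
/- Let N ≥ 2, let {ψ_k}_{k=1}^{N} be an orthonormal basis of ℂ^N, let P_k = ψ_k ψ_kᴴ, and let r > 0. Define M_1 := −r·P_1 + (1+r)·P_2 + (1/2)·Σ_{k=3}^{N} P_k and M_2 := (1+r)·P_1 − r·P_2 + (1/2)·Σ_{k=3}^{N} P_k, and define pure states ρ_1 := φ_1 φ_1ᴴ and ρ_2 := φ_2 φ_2ᴴ where φ_1 := √(r/(2r+1))·ψ_1 + √((r+1)/(2r+1))·ψ_2 and φ_2 := √((r+1)/(2r+1))·ψ_1 + √(r/(2r+1))·ψ_2. Then M_1 + M_2 = I, Tr(ρ_i · M_j) = δ_{ij} for all i, j ∈ {1, 2}, and Tr(ρ_1 · ρ_2) > 0; that is, the measurement (M_1, M_2) perfectly discriminates the non-orthogonal states ρ_1 and ρ_2. -/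
/-! In the basis `ψ` both observables are diagonal and agree (eigenvalue `1/2`) off
`span {ψ₁, ψ₂}`, while `φ₁, φ₂` lie in that span; so only the weights `r/(2r+1)` and
`(r+1)/(2r+1)` of `φ₁, φ₂` on `ψ₁, ψ₂` matter. They give `Tr(ρ₁M₁) = ((1+r)(r+1) - r·r)/(2r+1) = 1`
and `Tr(ρ₁M₂) = ((1+r)r - r(r+1))/(2r+1) = 0`, symmetrically for `ρ₂`, whereas the overlap
`Tr(ρ₁ρ₂) = 4r(r+1)/(2r+1)²` is positive. This is possible because `M₁, M₂` have the negative
eigenvalue `-r`. -/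

open ComplexOrder

open Finset Matrix

theorem Fin.sum_filter_two_le {M : Type*} [AddCommGroup M] {N : ℕ} (hN : 1 < N)
    (f : Fin N → M) :
    ∑ k ∈ univ.filter (fun k : Fin N => 2 ≤ (k : ℕ)), f k
      = ∑ k, f k - f ⟨0, Nat.zero_lt_of_lt hN⟩ - f ⟨1, hN⟩ := by
  have hlow : univ.filter (fun k : Fin N => ¬ 2 ≤ (k : ℕ))
      = {⟨0, Nat.zero_lt_of_lt hN⟩, ⟨1, hN⟩} := by
    ext k
    simp only [mem_filter, mem_univ, true_and, mem_insert, mem_singleton, Fin.ext_iff]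
    omega
  rw [← sum_filter_add_sum_filter_not univ (fun k : Fin N => 2 ≤ (k : ℕ)), hlow,
    sum_pair (by simp [Fin.ext_iff])]
  abel

namespace Matrix

variable {n α : Type*} [Fintype n]

theorem trace_vecMulVec_mul_vecMulVec [CommSemiring α] (u v w x : n → α) :
    (vecMulVec u v * vecMulVec w x).trace = (v ⬝ᵥ w) * (u ⬝ᵥ x) := by
  rw [vecMulVec_mul_vecMulVec, trace_vecMulVec, dotProduct_smul, smul_eq_mul]

theorem trace_vecMulVec_star_mul_vecMulVec_star (φ χ : n → ℂ) :
    (vecMulVec φ (star φ) * vecMulVec χ (star χ)).trace = Complex.normSq (star χ ⬝ᵥ φ) := by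
  rw [trace_vecMulVec_mul_vecMulVec, star_dotProduct, dotProduct_comm φ,
    Complex.normSq_eq_conj_mul_self, Complex.star_def]

theorem sum_vecMulVec_star_eq_one [DecidableEq n] [CommRing α] [StarRing α] {ψ : n → n → α}
    (hψ : ∀ k l, star (ψ k) ⬝ᵥ ψ l = if k = l then 1 else 0) :
    ∑ k, vecMulVec (ψ k) (star (ψ k)) = 1 := by
  have hunitary : star (of ψ)ᵀ * (of ψ)ᵀ = 1 := by
    ext k l
    simpa [mul_apply, dotProduct, one_apply] using hψ k l
  rw [← mul_eq_one_comm.mp hunitary]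
  ext x y
  simp [mul_apply, sum_apply, vecMulVec_apply]

section Orthonormal

variable {ι : Type*} [DecidableEq ι] {ψ : ι → n → ℂ}
  (hψ : ∀ k l, star (ψ k) ⬝ᵥ ψ l = if k = l then 1 else 0) {i j : ι} (hij : i ≠ j)
include hψ hij

theorem star_dotProduct_smul_add_smul_left (a b : ℂ) :
    star (ψ i) ⬝ᵥ (a • ψ i + b • ψ j) = a := by
  simp [dotProduct_add, hψ, hij]

theorem star_dotProduct_smul_add_smul_right (a b : ℂ) :
    star (ψ j) ⬝ᵥ (a • ψ i + b • ψ j) = b := by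
  simp [dotProduct_add, hψ, hij.symm]

theorem star_smul_add_smul_dotProduct_smul_add_smul (a b c d : ℂ) :
    star (c • ψ i + d • ψ j) ⬝ᵥ (a • ψ i + b • ψ j) = star c * a + star d * b := by
  rw [star_add, star_smul, star_smul, add_dotProduct, smul_dotProduct, smul_dotProduct,
    star_dotProduct_smul_add_smul_left hψ hij, star_dotProduct_smul_add_smul_right hψ hij,
    smul_eq_mul, smul_eq_mul]

theorem trace_vecMulVec_star_mul_vecMulVec_star_of_real (a b c d : ℝ) :
    (vecMulVec ((a : ℂ) • ψ i + (b : ℂ) • ψ j) (star ((a : ℂ) • ψ i + (b : ℂ) • ψ j)) *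
      vecMulVec ((c : ℂ) • ψ i + (d : ℂ) • ψ j) (star ((c : ℂ) • ψ i + (d : ℂ) • ψ j))).trace
      = ((a * c + b * d) ^ 2 : ℝ) := by
  rw [trace_vecMulVec_star_mul_vecMulVec_star,
    star_smul_add_smul_dotProduct_smul_add_smul hψ hij, Complex.star_def,
    Complex.conj_ofReal, Complex.conj_ofReal, ← Complex.ofReal_mul, ← Complex.ofReal_mul,
    ← Complex.ofReal_add, Complex.normSq_ofReal]
  ring_nf

theorem trace_vecMulVec_star_mul_of_real [DecidableEq n] (a b : ℝ) (c₀ c₁ t : ℂ) :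
    (vecMulVec ((a : ℂ) • ψ i + (b : ℂ) • ψ j) (star ((a : ℂ) • ψ i + (b : ℂ) • ψ j)) *
      (c₀ • vecMulVec (ψ i) (star (ψ i)) + c₁ • vecMulVec (ψ j) (star (ψ j)) +
        t • (1 - vecMulVec (ψ i) (star (ψ i)) - vecMulVec (ψ j) (star (ψ j))))).trace
      = c₀ * a ^ 2 + c₁ * b ^ 2 := by
  simp only [Matrix.mul_add, Matrix.mul_sub, Matrix.mul_smul, Matrix.mul_one, trace_add,
    trace_sub, trace_smul, smul_eq_mul, trace_vecMulVec_star_mul_vecMulVec_star,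
    star_dotProduct_smul_add_smul_left hψ hij, star_dotProduct_smul_add_smul_right hψ hij,
    trace_vecMulVec, dotProduct_comm _ (star _), star_smul_add_smul_dotProduct_smul_add_smul hψ hij,
    Complex.normSq_ofReal, Complex.star_def, Complex.conj_ofReal]
  push_cast
  ring

end Orthonormal

end Matrix

theorem stmt_17 {N : ℕ} (hN : 2 ≤ N)
    (ψ : Fin N → (Fin N → ℂ))
    (hortho : ∀ k l, ∑ x, (starRingEnd ℂ) (ψ k x) * ψ l x = if k = l then 1 else 0)
    (r : ℝ) (hr : 0 < r)
    (P : Fin N → Matrix (Fin N) (Fin N) ℂ)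
    (hP : ∀ k, P k = Matrix.vecMulVec (ψ k) (star (ψ k)))
    (M1 M2 : Matrix (Fin N) (Fin N) ℂ)
    (hM1 : M1 = (-(r : ℂ)) • P ⟨0, by omega⟩ + ((1 : ℂ) + (r : ℂ)) • P ⟨1, by omega⟩ +
      (2⁻¹ : ℂ) • ∑ k ∈ Finset.univ.filter (fun k : Fin N => 2 ≤ (k : ℕ)), P k)
    (hM2 : M2 = ((1 : ℂ) + (r : ℂ)) • P ⟨0, by omega⟩ + (-(r : ℂ)) • P ⟨1, by omega⟩ +
      (2⁻¹ : ℂ) • ∑ k ∈ Finset.univ.filter (fun k : Fin N => 2 ≤ (k : ℕ)), P k)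
    (φ1 φ2 : Fin N → ℂ)
    (hφ1 : φ1 = fun x => (Real.sqrt (r / (2 * r + 1)) : ℂ) * ψ ⟨0, by omega⟩ x +
      (Real.sqrt ((r + 1) / (2 * r + 1)) : ℂ) * ψ ⟨1, by omega⟩ x)
    (hφ2 : φ2 = fun x => (Real.sqrt ((r + 1) / (2 * r + 1)) : ℂ) * ψ ⟨0, by omega⟩ x +
      (Real.sqrt (r / (2 * r + 1)) : ℂ) * ψ ⟨1, by omega⟩ x)
    (ρ1 ρ2 : Matrix (Fin N) (Fin N) ℂ)
    (hρ1 : ρ1 = Matrix.vecMulVec φ1 (star φ1))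
    (hρ2 : ρ2 = Matrix.vecMulVec φ2 (star φ2)) :
    M1 + M2 = 1 ∧
    (ρ1 * M1).trace = 1 ∧ (ρ1 * M2).trace = 0 ∧
    (ρ2 * M1).trace = 0 ∧ (ρ2 * M2).trace = 1 ∧
    0 < (ρ1 * ρ2).trace := by
  set i₀ : Fin N := ⟨0, by omega⟩
  set i₁ : Fin N := ⟨1, by omega⟩
  have hi : i₀ ≠ i₁ := by simp [i₀, i₁, Fin.ext_iff]
  set a := √(r / (2 * r + 1))
  set b := √((r + 1) / (2 * r + 1))
  have ha : (a : ℂ) ^ 2 = r / (2 * r + 1) := by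
    exact_mod_cast Real.sq_sqrt (by positivity : 0 ≤ r / (2 * r + 1))
  have hb : (b : ℂ) ^ 2 = (r + 1) / (2 * r + 1) := by
    exact_mod_cast Real.sq_sqrt (by positivity : 0 ≤ (r + 1) / (2 * r + 1))
  have hφ1' : φ1 = (a : ℂ) • ψ i₀ + (b : ℂ) • ψ i₁ := hφ1
  have hφ2' : φ2 = (b : ℂ) • ψ i₀ + (a : ℂ) • ψ i₁ := hφ2
  have htail : ∑ k ∈ univ.filter (fun k : Fin N => 2 ≤ (k : ℕ)), P k
      = 1 - P i₀ - P i₁ := by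
    rw [Fin.sum_filter_two_le hN, ← sum_vecMulVec_star_eq_one hortho, ← funext hP]
  rw [htail] at hM1 hM2
  have h2r : (2 * r + 1 : ℂ) ≠ 0 := by exact_mod_cast (by positivity : 2 * r + 1 ≠ 0)
  have hoverlap : 0 < (ρ1 * ρ2).trace := by
    rw [hρ1, hρ2, hφ1', hφ2', trace_vecMulVec_star_mul_vecMulVec_star_of_real hortho hi,
      Complex.zero_lt_real]
    positivity
  refine ⟨by rw [hM1, hM2]; module, ?_, ?_, ?_, ?_, hoverlap⟩
  all_goals
    simp only [hρ1, hρ2, hφ1', hφ2', hM1, hM2, hP, trace_vecMulVec_star_mul_of_real hortho hi,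
      ha, hb]
    field_simp
    ring
end
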